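/- arXiv:1711.04998 — 11 statements merged into one kernel-verified Lean document; each statement's English description precedes it below -/
import Mathlib

section
/- Let G be a finite p-group with p odd such that Φ(G) ≤ Z(G), G^{p²} = 1, and the map g·Φ(G) ↦ g^p is a well-defined bijection from G/Φ(G) to Φ(G). Then the product on G/Φ(G) defined by ⟨x̄, ȳ⟩ = the unique element z̄ with z^p = [x,y] is well-defined and bilinear over F_p, and satisfies ⟨x̄, x̄⟩ = 0 for all x̄. -/
/-!
Maximal subgroups of a finite `p`-group are normal with abelian quotient, so commutators lie in
`Φ(G)` and are central. In class two the commutator is multiplicative in each variable and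
`(xy)^n = x^n y^n [y,x]^(n choose 2)`. For odd `p` we have `p ∣ p choose 2`, and `Φ(G)` has
exponent `p` because each of its elements is a `p`-th power; hence `x ↦ x^p` is multiplicative
and `f` is an injective multiplicative map. The pairing `f⁻¹[x,y]` is well defined because
commutators ignore central factors, and it inherits bilinearity from the commutator through `f`.
-/

open scoped commutatorElement

namespace Subgroup

variable {G : Type*} [Group G]

theorem commutatorElement_mul_left_of_mem_center {n : G} (hn : n ∈ center G) (x y : G) :
    ⁅x * n, y⁆ = ⁅x, y⁆ := by
  rw [commutatorElement_mul_left_eq_conj_mul,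
    Commute.commutator_eq (mem_center_iff.mp hn y).symm]
  group

theorem commutatorElement_mul_right_of_mem_center {n : G} (hn : n ∈ center G) (x y : G) :
    ⁅x, y * n⁆ = ⁅x, y⁆ := by
  rw [commutatorElement_mul_right_eq_mul_conj, Commute.commutator_eq (mem_center_iff.mp hn x)]
  group

theorem commutatorElement_eq_of_le_center {N : Subgroup G} (hN : N ≤ center G) {x x' y y' : G}
    (hx : (x : G ⧸ N) = x') (hy : (y : G ⧸ N) = y') : ⁅x, y⁆ = ⁅x', y'⁆ := by
  rw [← mul_inv_cancel_left x x', ← mul_inv_cancel_left y y',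
    commutatorElement_mul_left_of_mem_center (hN (QuotientGroup.eq.mp hx)),
    commutatorElement_mul_right_of_mem_center (hN (QuotientGroup.eq.mp hy))]

end Subgroup

section CommutatorCentral

variable {G : Type*} [Group G]

theorem commutatorElement_mul_left_of_commutator_central
    (hc : ∀ x y g : G, Commute ⁅x, y⁆ g) (x y z : G) : ⁅x * y, z⁆ = ⁅x, z⁆ * ⁅y, z⁆ := by
  rw [commutatorElement_mul_left_eq_conj_mul, mul_assoc x, (hc y z _).eq, mul_inv_cancel_left,
    (hc y z _).eq]

theorem commutatorElement_mul_right_of_commutator_central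
    (hc : ∀ x y g : G, Commute ⁅x, y⁆ g) (x y z : G) : ⁅x, y * z⁆ = ⁅x, y⁆ * ⁅x, z⁆ := by
  rw [commutatorElement_mul_right_eq_mul_conj, mul_assoc _ y, ← (hc x z y).eq, ← mul_assoc,
    mul_inv_cancel_right]

theorem commutatorElement_pow_left_of_commutator_central
    (hc : ∀ x y g : G, Commute ⁅x, y⁆ g) (x y : G) (n : ℕ) : ⁅x ^ n, y⁆ = ⁅x, y⁆ ^ n := by
  induction n with
  | zero => simp
  | succ n ih =>
    rw [pow_succ, commutatorElement_mul_left_of_commutator_central hc, ih, pow_succ]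

theorem mul_pow_of_commutator_central (hc : ∀ x y g : G, Commute ⁅x, y⁆ g) (x y : G) (n : ℕ) :
    (x * y) ^ n = x ^ n * y ^ n * ⁅y, x⁆ ^ n.choose 2 := by
  induction n with
  | zero => simp
  | succ n ih =>
    have hswap : y ^ n * x = x * y ^ n * ⁅y, x⁆ ^ n := by
      rw [← commutatorElement_pow_left_of_commutator_central hc, ← (hc _ _ _).eq,
        commutatorElement_def]
      group
    calc (x * y) ^ (n + 1) = x ^ n * (y ^ n * x) * y * ⁅y, x⁆ ^ n.choose 2 := by
          rw [pow_succ, ih, mul_assoc _ (⁅y, x⁆ ^ _), ((hc y x _).pow_left _).eq]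
          group
      _ = x ^ (n + 1) * y ^ n * (⁅y, x⁆ ^ n * y) * ⁅y, x⁆ ^ n.choose 2 := by
          rw [hswap]
          group
      _ = x ^ (n + 1) * y ^ (n + 1) * ⁅y, x⁆ ^ (n + 1).choose 2 := by
          rw [((hc y x y).pow_left n).eq, Nat.choose_succ_succ', Nat.choose_one_right, pow_add]
          group

theorem mul_pow_of_commutator_central_of_odd (hc : ∀ x y g : G, Commute ⁅x, y⁆ g) {n : ℕ}
    (hn : Odd n) (hcn : ∀ x y : G, ⁅x, y⁆ ^ n = 1) (x y : G) : (x * y) ^ n = x ^ n * y ^ n := by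
  obtain ⟨k, rfl⟩ := hn
  have hchoose : (2 * k + 1).choose 2 = (2 * k + 1) * k := by
    rw [Nat.choose_two_right, Nat.add_sub_cancel, mul_left_comm, Nat.mul_div_cancel_left _ two_pos]
  rw [mul_pow_of_commutator_central hc, hchoose, pow_mul, hcn, one_pow, mul_one]

end CommutatorCentral

namespace IsPGroup

variable {p : ℕ} [Fact p.Prime] {G : Type*} [Group G] [Finite G]

theorem commutatorElement_mem_of_isCoatom (hG : IsPGroup p G) {M : Subgroup G}
    (hM : IsCoatom M) (x y : G) : ⁅x, y⁆ ∈ M := by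
  have := hG.isNilpotent
  have : M.Normal :=
    Subgroup.NormalizerCondition.normal_of_coatom M Group.normalizerCondition_of_isNilpotent hM
  have hMC : M ≤ (Subgroup.center (G ⧸ M)).comap (QuotientGroup.mk' M) :=
    (QuotientGroup.ker_mk' M).ge.trans (Subgroup.ker_le_comap _ _)
  have hC : (Subgroup.center (G ⧸ M)).comap (QuotientGroup.mk' M) = ⊤ := by
    refine (hM.le_iff.mp hMC).resolve_right fun hCM => ?_
    have : Nontrivial (G ⧸ M) := QuotientGroup.nontrivial_iff.mpr hM.1
    have hZ := (Subgroup.nontrivial_iff_ne_bot _).mp (hG.to_quotient M).center_nontrivial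
    rw [← Subgroup.map_comap_eq_self_of_surjective (QuotientGroup.mk'_surjective M)
      (Subgroup.center _), hCM, QuotientGroup.map_mk'_self] at hZ
    exact hZ rfl
  have hx : (x : G ⧸ M) ∈ Subgroup.center (G ⧸ M) := hC.ge (Subgroup.mem_top x)
  rw [← QuotientGroup.eq_one_iff, ← QuotientGroup.mk'_apply, map_commutatorElement]
  exact Commute.commutator_eq (Subgroup.mem_center_iff.mp hx _).symm

theorem commutatorElement_mem_frattini (hG : IsPGroup p G) (x y : G) : ⁅x, y⁆ ∈ frattini G := by
  simp only [frattini, Order.radical, Set.mem_ofPred_eq, Subgroup.mem_iInf]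
  exact fun M hM => hG.commutatorElement_mem_of_isCoatom hM x y

end IsPGroup

/-- Let `p` be an odd prime and `G` a finite `p`-group with
`Φ(G) ≤ Z(G)`, `G^{p²} = 1`, and such that `g·Φ(G) ↦ g^p` is a well-defined
bijection `G/Φ(G) → Φ(G)` (encoded by a map `f` with `f x̄ = x^p`).
Then the product `⟨x̄, ȳ⟩ := z̄` where `z^p = [x,y]` is well-defined and
bilinear over `F_p` (additive in each variable, hence `F_p`-bilinear) and
alternating: there is a map `m` on `G/Φ(G)` with `f (m x̄ ȳ) = [x,y]`,
additive in each argument, and `m a a = 1`. -/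
theorem stmt1 {p : ℕ} [Fact p.Prime] (hodd : Odd p)
    {G : Type*} [Group G] [Finite G] (hp : IsPGroup p G)
    (hcentral : frattini G ≤ Subgroup.center G)
    (hexp : ∀ g : G, g ^ (p ^ 2) = 1)
    (f : G ⧸ frattini G → frattini G)
    (hf : ∀ x : G, (f ((x : G ⧸ frattini G)) : G) = x ^ p)
    (hbij : Function.Bijective f) :
    ∃ m : G ⧸ frattini G → G ⧸ frattini G → G ⧸ frattini G,
      (∀ x y : G, (f (m x y) : G) = ⁅x, y⁆) ∧
      (∀ a b c : G ⧸ frattini G, m (a * b) c = m a c * m b c) ∧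
      (∀ a b c : G ⧸ frattini G, m a (b * c) = m a b * m a c) ∧
      (∀ a : G ⧸ frattini G, m a a = 1) := by
  have hcomm : ∀ x y : G, ⁅x, y⁆ ∈ frattini G := hp.commutatorElement_mem_frattini
  have hc : ∀ x y g : G, Commute ⁅x, y⁆ g := fun x y g =>
    (Subgroup.mem_center_iff.mp (hcentral (hcomm x y)) g).symm
  have hpow_frattini : ∀ z ∈ frattini G, z ^ p = 1 := by
    intro z hz
    obtain ⟨a, ha⟩ := hbij.2 ⟨z, hz⟩
    obtain ⟨x, rfl⟩ := QuotientGroup.mk_surjective a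
    rw [show z = x ^ p by rw [← hf, ha], ← pow_mul, ← sq, hexp]
  have hf_mul : ∀ a b, (f (a * b) : G) = f a * f b := by
    rintro ⟨x⟩ ⟨y⟩
    show (f ((x * y : G) : G ⧸ frattini G) : G) = f x * f y
    rw [hf, hf, hf, mul_pow_of_commutator_central_of_odd hc hodd
      (fun x y => hpow_frattini _ (hcomm x y))]
  have hf_inj : ∀ a b, (f a : G) = f b → a = b := fun a b h => hbij.1 (Subtype.ext h)
  let m : G ⧸ frattini G → G ⧸ frattini G → G ⧸ frattini G :=
    fun a b => (Equiv.ofBijective f hbij).symm ⟨⁅a.out, b.out⁆, hcomm _ _⟩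
  have hm : ∀ x y : G, (f (m x y) : G) = ⁅x, y⁆ := by
    intro x y
    rw [Equiv.ofBijective_apply_symm_apply f hbij]
    exact Subgroup.commutatorElement_eq_of_le_center hcentral (QuotientGroup.out_eq' _)
      (QuotientGroup.out_eq' _)
  refine ⟨m, hm, fun a b c => ?_, fun a b c => ?_, fun a => ?_⟩ <;>
    obtain ⟨x, rfl⟩ := QuotientGroup.mk_surjective a <;> apply hf_inj
  · obtain ⟨y, rfl⟩ := QuotientGroup.mk_surjective b
    obtain ⟨z, rfl⟩ := QuotientGroup.mk_surjective c
    rw [hf_mul, ← QuotientGroup.mk_mul, hm, hm, hm,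
      commutatorElement_mul_left_of_commutator_central hc]
  · obtain ⟨y, rfl⟩ := QuotientGroup.mk_surjective b
    obtain ⟨z, rfl⟩ := QuotientGroup.mk_surjective c
    rw [hf_mul, ← QuotientGroup.mk_mul, hm, hm, hm,
      commutatorElement_mul_right_of_commutator_central hc]
  · rw [hm, commutatorElement_self, ← QuotientGroup.mk_one, hf, one_pow]
end

section
/- Let G be a finite non-abelian p-group with a unique non-trivial proper characteristic subgroup N. Then both G/N and N are elementary abelian p-groups. -/
/-!
The commutator subgroup and the centre are characteristic and, `G` being a non-abelian
nilpotent group, both are nontrivial and proper; so `G' = N = Z(G)`, and `G ⧸ N` and `N` are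
abelian. For an abelian section `H ⧸ M` of `G` with `M, H` characteristic, the elements of `H`
whose `p`-th power lies in `M` form a characteristic subgroup, strictly larger than `M` since
`H ⧸ M` is a nontrivial `p`-group. Taking `(H, M) = (G, N)` forces it to be `G`, and
`(H, M) = (N, 1)` forces it to be `N`: these are the two exponent statements.
-/

namespace Subgroup

variable {G : Type*} [Group G]

/-- The elements of `H` whose `n`-th power lies in `M`; for `M ≤ H` this is the preimage of
`Ω_n(H ⧸ M)`. -/
def rootsMod (H M : Subgroup G) [M.Normal] (hHM : ⁅H, H⁆ ≤ M) (n : ℕ) : Subgroup G where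
  carrier := {x | x ∈ H ∧ x ^ n ∈ M}
  one_mem' := ⟨H.one_mem, by simp [M.one_mem]⟩
  mul_mem' := by
    rintro x y ⟨hxH, hxM⟩ ⟨hyH, hyM⟩
    refine ⟨H.mul_mem hxH hyH, ?_⟩
    have hxy : Commute (x : G ⧸ M) y := by
      rw [← commutatorElement_eq_one_iff_commute]
      exact (QuotientGroup.eq_one_iff _).mpr (hHM (commutator_mem_commutator hxH hyH))
    rw [← QuotientGroup.eq_one_iff, QuotientGroup.mk_pow, QuotientGroup.mk_mul, hxy.mul_pow,
      ← QuotientGroup.mk_pow, ← QuotientGroup.mk_pow, (QuotientGroup.eq_one_iff _).mpr hxM,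
      (QuotientGroup.eq_one_iff _).mpr hyM, one_mul]
  inv_mem' := by
    rintro x ⟨hxH, hxM⟩
    exact ⟨H.inv_mem hxH, by simpa only [inv_pow] using M.inv_mem hxM⟩

variable {H M : Subgroup G} [M.Normal] {hHM : ⁅H, H⁆ ≤ M} {n : ℕ}

@[simp]
theorem mem_rootsMod {x : G} : x ∈ rootsMod H M hHM n ↔ x ∈ H ∧ x ^ n ∈ M := Iff.rfl

theorem rootsMod_characteristic [H.Characteristic] [M.Characteristic] :
    (rootsMod H M hHM n).Characteristic := by
  refine characteristic_iff_comap_eq.mpr fun φ ↦ ext fun x ↦ ?_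
  simp only [mem_comap, mem_rootsMod, ← map_pow]
  rw [← mem_comap (K := H), ← mem_comap (K := M), ‹H.Characteristic›.fixed,
    ‹M.Characteristic›.fixed]

end Subgroup

open Subgroup

theorem IsPGroup.exists_mem_notMem_pow_mem {p : ℕ} {G : Type*} [Group G] (hG : IsPGroup p G)
    {H M : Subgroup G} (hle : ¬H ≤ M) : ∃ x ∈ H, x ∉ M ∧ x ^ p ∈ M := by
  obtain ⟨x, hxH, hxM⟩ := SetLike.not_le_iff_exists.mp hle
  obtain ⟨k, hk⟩ := hG x
  induction k generalizing x with
  | zero =>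
    rw [pow_zero, pow_one] at hk
    exact absurd (hk ▸ M.one_mem) hxM
  | succ k ih =>
    by_cases hpM : x ^ p ∈ M
    · exact ⟨x, hxH, hxM, hpM⟩
    · exact ih (x ^ p) (H.pow_mem hxH p) hpM (by rwa [← pow_mul, ← pow_succ'])

theorem IsPGroup.not_rootsMod_le {p : ℕ} {G : Type*} [Group G] (hG : IsPGroup p G)
    {H M : Subgroup G} [M.Normal] (hHM : ⁅H, H⁆ ≤ M) (hle : ¬H ≤ M) :
    ¬rootsMod H M hHM p ≤ M := by
  obtain ⟨x, hxH, hxM, hpM⟩ := hG.exists_mem_notMem_pow_mem hle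
  exact fun h ↦ hxM (h ⟨hxH, hpM⟩)

/-- If `G` is a finite non-abelian `p`-group whose only characteristic
subgroups are `⊥`, `N` and `⊤` (with `⊥ < N < ⊤`), then both `G/N` and `N` are
elementary abelian `p`-groups. -/
theorem stmt3 {p : ℕ} [Fact p.Prime] {G : Type*} [Group G] [Finite G]
    (hp : IsPGroup p G) (hna : ¬ ∀ x y : G, x * y = y * x)
    (N : Subgroup G) (hchar : N.Characteristic) (hbot : N ≠ ⊥) (htop : N ≠ ⊤)
    (huniq : ∀ H : Subgroup G, H.Characteristic → H = ⊥ ∨ H = N ∨ H = ⊤) :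
    (∀ a b : G ⧸ N, a * b = b * a) ∧ (∀ a : G ⧸ N, a ^ p = 1) ∧
    (∀ a b : N, a * b = b * a) ∧ (∀ a : N, a ^ p = 1) := by
  have eq_N {K : Subgroup G} (hK : K.Characteristic) (hK₁ : K ≠ ⊥) (hK₂ : K ≠ ⊤) : K = N :=
    ((huniq K hK).resolve_left hK₁).resolve_right hK₂
  have hnc : ¬IsMulCommutative G := fun h ↦ hna h.is_comm.comm
  have : Nontrivial G :=
    (subsingleton_or_nontrivial G).resolve_left fun _ ↦ hbot (Subsingleton.elim _ _)
  have := hp.isNilpotent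
  have hD : commutator G = N := eq_N inferInstance (mt (_root_.commutator_eq_bot_iff G).mp hnc)
    (Group.IsSolvable.commutator_lt_top_of_nontrivial G).ne
  have hZ : center G = N := eq_N inferInstance hp.bot_lt_center.ne'
    fun h ↦ hnc ⟨⟨fun x y ↦ mem_center_iff.mp (h ▸ mem_top y) x⟩⟩
  have hNZ : ⁅N, N⁆ ≤ ⊥ :=
    (commutator_eq_bot_iff_le_centralizer.mpr (hZ.ge.trans (center_le_centralizer _))).le
  have hQ : rootsMod ⊤ N (hD ▸ le_rfl) p = ⊤ := by
    refine ((huniq _ rootsMod_characteristic).resolve_left ?_).resolve_left ?_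
    · exact ne_bot_of_le_ne_bot hbot fun x hx ↦ ⟨mem_top x, N.pow_mem hx p⟩
    · exact fun h ↦ hp.not_rootsMod_le _ (fun h ↦ htop (top_le_iff.mp h)) h.le
  have hΩ : rootsMod N ⊥ hNZ p = N :=
    eq_N rootsMod_characteristic (fun h ↦ hp.not_rootsMod_le _ (mt le_bot_iff.mp hbot) h.le)
      (ne_top_of_le_ne_top htop fun _ hx ↦ hx.1)
  refine ⟨(Normal.quotient_commutative_iff_commutator_le.mpr hD.le).is_comm.comm, ?_, ?_, ?_⟩
  · exact fun a ↦ QuotientGroup.induction_on a fun x ↦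
      (QuotientGroup.eq_one_iff _).mpr (hQ.ge (mem_top x)).2
  · exact fun a b ↦ Subtype.ext (mem_center_iff.mp (hZ.ge b.2) a)
  · exact fun a ↦ Subtype.ext (mem_bot.mp (hΩ.ge a.2).2)
end

section
/- Let G be a finite p-group such that G/Φ(G) and Φ(G) are both non-trivial elementary abelian p-groups. Then G has exactly three characteristic subgroups (namely 1, Φ(G), G) if and only if Aut(G) acts irreducibly on both G/Φ(G) and Φ(G) viewed as F_p-vector spaces. -/
/-!
A characteristic subgroup `H` meets `Φ(G)` and spans with it characteristic subgroups
`H ⊓ Φ(G) ≤ Φ(G) ≤ H ⊔ Φ(G)`, so irreducibility on both layers forces `H ⊔ Φ(G) ∈ {Φ(G), G}`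
and `H ⊓ Φ(G) ∈ {1, Φ(G)}`. If `H ⊔ Φ(G) = G` then `H = G` because the Frattini subgroup is
non-generating; otherwise `H ≤ Φ(G)` and `H = H ⊓ Φ(G)`.
-/

namespace Subgroup

variable {G : Type*} [Group G] {N : Subgroup G}

theorem eq_or_eq_top_of_le_of_characteristic
    (hN : ∀ H : Subgroup G, H.Characteristic → H = ⊥ ∨ H = N ∨ H = ⊤) (hN_bot : N ≠ ⊥)
    {H : Subgroup G} (hle : N ≤ H) [H.Characteristic] : H = N ∨ H = ⊤ := by
  rcases hN H ‹_› with rfl | hH | hH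
  · exact absurd (le_bot_iff.mp hle) hN_bot
  · exact .inl hH
  · exact .inr hH

theorem eq_bot_or_eq_of_le_of_characteristic
    (hN : ∀ H : Subgroup G, H.Characteristic → H = ⊥ ∨ H = N ∨ H = ⊤) (hN_top : N ≠ ⊤)
    {K : Subgroup G} (hle : K ≤ N) [K.Characteristic] : K = ⊥ ∨ K = N := by
  rcases hN K ‹_› with hK | hK | rfl
  · exact .inl hK
  · exact .inr hK
  · exact absurd (top_le_iff.mp hle) hN_top

theorem eq_bot_or_eq_or_eq_top_of_characteristic [N.Characteristic]
    (hN_nongen : ∀ H : Subgroup G, H ⊔ N = ⊤ → H = ⊤)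
    (habove : ∀ H : Subgroup G, N ≤ H → H.Characteristic → H = N ∨ H = ⊤)
    (hbelow : ∀ K : Subgroup G, K ≤ N → K.Characteristic → K = ⊥ ∨ K = N)
    (H : Subgroup G) [H.Characteristic] : H = ⊥ ∨ H = N ∨ H = ⊤ := by
  rcases habove (H ⊔ N) le_sup_right inferInstance with hsup | hsup
  · have hle : H ≤ N := sup_eq_right.mp hsup
    have hinf := hbelow (H ⊓ N) inf_le_right inferInstance
    rw [inf_eq_left.mpr hle] at hinf
    exact hinf.imp_right .inl
  · exact .inr (.inr (hN_nongen H hsup))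

end Subgroup

theorem stmt4_general {G : Type*} [Group G] [Finite G]
    (hq_ne : frattini G ≠ ⊤)
    (hf_ne : frattini G ≠ ⊥) :
    (∀ H : Subgroup G, H.Characteristic → H = ⊥ ∨ H = frattini G ∨ H = ⊤) ↔
      ((∀ H : Subgroup G, frattini G ≤ H →
          (∀ φ : G ≃* G, H.map φ.toMonoidHom = H) → H = frattini G ∨ H = ⊤) ∧
       (∀ K : Subgroup G, K ≤ frattini G →
          (∀ φ : G ≃* G, K.map φ.toMonoidHom = K) → K = ⊥ ∨ K = frattini G)) := by
  simp only [← Subgroup.characteristic_iff_map_eq]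
  constructor
  · intro h
    exact ⟨fun H hle _ => Subgroup.eq_or_eq_top_of_le_of_characteristic h hf_ne hle,
      fun K hle _ => Subgroup.eq_bot_or_eq_of_le_of_characteristic h hq_ne hle⟩
  · rintro ⟨habove, hbelow⟩ H _
    exact Subgroup.eq_bot_or_eq_or_eq_top_of_characteristic (fun _ => frattini_nongenerating)
      habove hbelow H

/-- Let `G` be a finite `p`-group with `G/Φ(G)` and `Φ(G)` non-trivial
elementary abelian. Then `G` has exactly three characteristic subgroups
(`⊥`, `Φ(G)`, `⊤`) if and only if `Aut(G)` acts irreducibly on both `G/Φ(G)` and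
`Φ(G)` as `F_p`-vector spaces.  Irreducibility is expressed via the lattice
correspondence: invariant subspaces of `G/Φ(G)` correspond to `Aut(G)`-invariant
subgroups of `G` containing `Φ(G)`, and invariant subspaces of `Φ(G)` to
`Aut(G)`-invariant subgroups of `G` contained in `Φ(G)`. -/
theorem stmt4 {p : ℕ} [Fact p.Prime] {G : Type*} [Group G] [Finite G]
    (hp : IsPGroup p G)
    (hq_ab : ∀ a b : G ⧸ frattini G, a * b = b * a)
    (hq_exp : ∀ a : G ⧸ frattini G, a ^ p = 1)
    (hq_ne : frattini G ≠ ⊤)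
    (hf_ab : ∀ a b : frattini G, a * b = b * a)
    (hf_exp : ∀ a : frattini G, a ^ p = 1)
    (hf_ne : frattini G ≠ ⊥) :
    (∀ H : Subgroup G, H.Characteristic → H = ⊥ ∨ H = frattini G ∨ H = ⊤) ↔
      ((∀ H : Subgroup G, frattini G ≤ H →
          (∀ φ : G ≃* G, H.map φ.toMonoidHom = H) → H = frattini G ∨ H = ⊤) ∧
       (∀ K : Subgroup G, K ≤ frattini G →
          (∀ φ : G ≃* G, K.map φ.toMonoidHom = K) → K = ⊥ ∨ K = frattini G)) :=
  stmt4_general hq_ne hf_ne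
end

section
/- Let G be a group with a unique non-trivial proper characteristic subgroup N, and suppose Aut(G) fixes no non-trivial element of N and no non-trivial element of G/N. Then for every k ≥ 1, the direct power G^{×k} has a unique non-trivial proper characteristic subgroup, namely N^{×k}. -/
namespace Stmt5Helpers

/-! ### Automorphisms of direct powers -/

variable {G : Type*} [Group G] {k : ℕ}

/-- The automorphism of `G^k` permuting the coordinates by `σ`. -/
def permE (σ : Equiv.Perm (Fin k)) : (Fin k → G) ≃* (Fin k → G) where
  toFun x := x ∘ σ
  invFun x := x ∘ σ.symm
  left_inv x := by funext l; simp
  right_inv x := by funext l; simp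
  map_mul' x y := rfl

/-- The automorphism of `G^k` acting by `φ` in coordinate `i` and trivially elsewhere. -/
def coordE (i : Fin k) (φ : G ≃* G) : (Fin k → G) ≃* (Fin k → G) :=
  MulEquiv.piCongrRight (fun j => if j = i then φ else MulEquiv.refl G)

lemma coordE_apply (i : Fin k) (φ : G ≃* G) (x : Fin k → G) (j : Fin k) :
    coordE i φ x j = if j = i then φ (x j) else x j := by
  simp only [coordE, MulEquiv.piCongrRight_apply]
  split <;> rfl

lemma coordE_mulSingle (i : Fin k) (φ : G ≃* G) (g : G) :
    coordE i φ (Pi.mulSingle i g) = Pi.mulSingle i (φ g) := by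
  funext j
  rw [coordE_apply]
  by_cases h : j = i
  · subst h; simp
  · simp [h, Pi.mulSingle_eq_of_ne h]

lemma permE_apply (σ : Equiv.Perm (Fin k)) (x : Fin k → G) (l : Fin k) :
    permE σ x l = x (σ l) := rfl

lemma permE_mulSingle (σ : Equiv.Perm (Fin k)) (i : Fin k) (g : G) :
    permE σ (Pi.mulSingle (σ i) g) = Pi.mulSingle i g := by
  funext l
  rw [permE_apply]
  by_cases h : l = i
  · subst h; simp
  · rw [Pi.mulSingle_eq_of_ne (fun hc => h (σ.injective hc)), Pi.mulSingle_eq_of_ne h]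

lemma coordE_mul_inv (i : Fin k) (φ : G ≃* G) (x : Fin k → G) :
    coordE i φ x * x⁻¹ = Pi.mulSingle i (φ (x i) * (x i)⁻¹) := by
  funext j
  by_cases h : j = i
  · subst h
    simp [coordE_apply]
  · simp [coordE_apply, h, Pi.mulSingle_eq_of_ne h]

/-! ### Generating the direct power from its coordinate subgroups -/

lemma mem_of_single_mem_aux (H : Subgroup (Fin k → G)) (s : Finset (Fin k)) (x : Fin k → G)
    (hx : ∀ i, Pi.mulSingle i (x i) ∈ H) (hs : ∀ i ∉ s, x i = 1) : x ∈ H := by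
  classical
  induction s using Finset.induction_on generalizing x with
  | empty =>
      have hx1 : x = 1 := funext fun i => hs i (Finset.notMem_empty i)
      rw [hx1]; exact one_mem H
  | @insert a s ha ih =>
      have hdecomp : x = Pi.mulSingle a (x a) * Function.update x a 1 := by
        funext j
        by_cases h : j = a
        · subst h; simp
        · simp [h, Pi.mulSingle_eq_of_ne h, Function.update_of_ne h]
      rw [hdecomp]
      refine mul_mem (hx a) (ih _ ?_ ?_)
      · intro i
        by_cases h : i = a
        · subst h
          have : Function.update x i (1 : G) i = 1 := by simp
          rw [this, Pi.mulSingle_one]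
          exact one_mem H
        · rw [Function.update_of_ne h]; exact hx i
      · intro i hi
        by_cases h : i = a
        · subst h; simp
        · rw [Function.update_of_ne h]
          exact hs i (fun hc => (Finset.mem_insert.mp hc).elim h hi)

lemma pi_le_of_single_mem (H : Subgroup (Fin k → G)) (B : Subgroup G)
    (hB : ∀ i : Fin k, ∀ g ∈ B, Pi.mulSingle i g ∈ H) :
    Subgroup.pi Set.univ (fun _ => B) ≤ H := by
  intro x hx
  exact mem_of_single_mem_aux H Finset.univ x
    (fun i => hB i (x i) ((Subgroup.mem_pi Set.univ).mp hx i (Set.mem_univ i)))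
    (fun i hi => absurd (Finset.mem_univ i) hi)

/-! ### Consequences of the fixed-point hypotheses -/

variable (N : Subgroup G) (hchar : N.Characteristic)

lemma mem_of_aut_quotient
    (hfixQ : ∀ x : G ⧸ N,
      (∀ (φ : G ≃* G) (h : N ≤ N.comap φ.toMonoidHom),
        QuotientGroup.map N N φ.toMonoidHom h x = x) → x = 1)
    (x : G) (hx : ∀ φ : G ≃* G, φ x * x⁻¹ ∈ N) : x ∈ N := by
  haveI := hchar
  have key : ((x : G ⧸ N)) = 1 := by
    apply hfixQ
    intro φ h
    rw [QuotientGroup.map_mk]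
    rw [QuotientGroup.eq]
    have h2 := Subgroup.Normal.conj_mem inferInstance _ (inv_mem (hx φ)) x⁻¹
    simpa [mul_assoc, mul_inv_rev] using h2
  exact (QuotientGroup.eq_one_iff x).mp key

lemma eq_one_of_aut_fixed
    (hfixN : ∀ n : N, (∀ φ : G ≃* G, φ (n : G) = n) → (n : G) = 1)
    (hfixQ : ∀ x : G ⧸ N,
      (∀ (φ : G ≃* G) (h : N ≤ N.comap φ.toMonoidHom),
        QuotientGroup.map N N φ.toMonoidHom h x = x) → x = 1)
    (x : G) (hx : ∀ φ : G ≃* G, φ x = x) : x = 1 := by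
  have hmem : x ∈ N := mem_of_aut_quotient N hchar hfixQ x
    (fun φ => by rw [hx φ]; simp [one_mem])
  exact hfixN ⟨x, hmem⟩ hx

/-! ### Classification of characteristic subgroups of the power -/

theorem classify
    (huniq : ∀ H : Subgroup G, H.Characteristic → H = ⊥ ∨ H = N ∨ H = ⊤)
    (hfixN : ∀ n : N, (∀ φ : G ≃* G, φ (n : G) = n) → (n : G) = 1)
    (hfixQ : ∀ x : G ⧸ N,
      (∀ (φ : G ≃* G) (h : N ≤ N.comap φ.toMonoidHom),
        QuotientGroup.map N N φ.toMonoidHom h x = x) → x = 1)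
    (hk : 1 ≤ k)
    (H : Subgroup (Fin k → G)) (hH : H.Characteristic) :
    H = ⊥ ∨ H = Subgroup.pi Set.univ (fun _ : Fin k => N) ∨ H = ⊤ := by
  classical
  set i0 : Fin k := ⟨0, hk⟩ with hi0
  have hHc : ∀ (ψ : (Fin k → G) ≃* (Fin k → G)) (x : Fin k → G), ψ x ∈ H ↔ x ∈ H := by
    intro ψ x
    have h := Subgroup.characteristic_iff_comap_eq.mp hH ψ
    constructor
    · intro hx
      have h2 : x ∈ H.comap ψ.toMonoidHom := Subgroup.mem_comap.mpr hx
      rwa [h] at h2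
    · intro hx
      rw [← h] at hx
      exact Subgroup.mem_comap.mp hx
  set A : Subgroup G := H.comap (MonoidHom.mulSingle (fun _ : Fin k => G) i0) with hA
  have hAmem : ∀ g : G, g ∈ A ↔ Pi.mulSingle i0 g ∈ H := fun g => Iff.rfl
  have hswap : ∀ (i : Fin k) (g : G), Pi.mulSingle i g ∈ H ↔ g ∈ A := by
    intro i g
    have e : permE (Equiv.swap i0 i) (Pi.mulSingle i g) = Pi.mulSingle i0 g := by
      have h1 := permE_mulSingle (G := G) (Equiv.swap i0 i) i0 g
      rwa [Equiv.swap_apply_left] at h1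
    rw [hAmem, ← e, hHc]
  have hAchar : A.Characteristic := by
    rw [Subgroup.characteristic_iff_comap_eq]
    intro φ
    ext g
    rw [Subgroup.mem_comap]
    show Pi.mulSingle i0 (φ g) ∈ H ↔ Pi.mulSingle i0 g ∈ H
    rw [← coordE_mulSingle i0 φ g, hHc]
  have hkey : ∀ x ∈ H, ∀ (i : Fin k) (φ : G ≃* G), φ (x i) * (x i)⁻¹ ∈ A := by
    intro x hx i φ
    have h1 : coordE i φ x ∈ H := (hHc _ _).mpr hx
    have h2 : coordE i φ x * x⁻¹ ∈ H := mul_mem h1 (inv_mem hx)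
    rw [coordE_mul_inv] at h2
    exact (hswap i _).mp h2
  rcases huniq A hAchar with hA0 | hA0 | hA0
  · left
    ext x
    simp only [Subgroup.mem_bot]
    constructor
    · intro hx
      refine funext fun i => ?_
      show x i = (1 : Fin k → G) i
      rw [Pi.one_apply]
      apply eq_one_of_aut_fixed N hchar hfixN hfixQ
      intro φ
      have h3 := hkey x hx i φ
      rw [hA0, Subgroup.mem_bot] at h3
      exact mul_inv_eq_one.mp h3
    · rintro rfl; exact one_mem H
  · right; left
    apply le_antisymm
    · intro x hx
      rw [Subgroup.mem_pi]
      intro i _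
      apply mem_of_aut_quotient N hchar hfixQ
      intro φ
      have h3 := hkey x hx i φ
      rwa [hA0] at h3
    · apply pi_le_of_single_mem
      intro i g hg
      exact (hswap i g).mpr (by rw [hA0]; exact hg)
  · right; right
    rw [eq_top_iff]
    intro x _
    refine pi_le_of_single_mem H ⊤ (fun i g _ => (hswap i g).mpr (by rw [hA0]; trivial)) ?_
    rw [Subgroup.mem_pi]
    intro i _
    trivial

/-! ### Moving nonzero vectors of an elementary abelian group -/

theorem move_vec {p : ℕ} [Fact p.Prime] {V : Type*} [AddCommGroup V] [Finite V]
    [Module (ZMod p) V] {a b : V} (ha' : a ≠ 0) (hb' : b ≠ 0) :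
    ∃ σ : V ≃+ V, σ a = b := by
  haveI : FiniteDimensional (ZMod p) V := Module.Finite.of_finite (R := ZMod p)
  obtain ⟨Ca, hCa⟩ := Submodule.exists_isCompl ((ZMod p) ∙ a)
  obtain ⟨Cb, hCb⟩ := Submodule.exists_isCompl ((ZMod p) ∙ b)
  have hrk : Module.finrank (ZMod p) Ca = Module.finrank (ZMod p) Cb := by
    have h1 := Submodule.finrank_add_eq_of_isCompl hCa
    have h2 := Submodule.finrank_add_eq_of_isCompl hCb
    rw [finrank_span_singleton ha'] at h1
    rw [finrank_span_singleton hb'] at h2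
    omega
  have σC : Ca ≃ₗ[ZMod p] Cb :=
    (FiniteDimensional.nonempty_linearEquiv_of_finrank_eq hrk).some
  set ea : (ZMod p) ≃ₗ[ZMod p] ((ZMod p) ∙ a) :=
    LinearEquiv.toSpanNonzeroSingleton (ZMod p) V a ha' with hea
  set eb : (ZMod p) ≃ₗ[ZMod p] ((ZMod p) ∙ b) :=
    LinearEquiv.toSpanNonzeroSingleton (ZMod p) V b hb' with heb
  set σL : ((ZMod p) ∙ a) ≃ₗ[ZMod p] ((ZMod p) ∙ b) := ea.symm.trans eb with hσL
  set σ : V ≃ₗ[ZMod p] V :=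
    (Submodule.prodEquivOfIsCompl _ Ca hCa).symm.trans
      ((σL.prodCongr σC).trans (Submodule.prodEquivOfIsCompl _ Cb hCb)) with hσ
  refine ⟨σ.toAddEquiv, ?_⟩
  show σ a = b
  have h1 : (Submodule.prodEquivOfIsCompl _ Ca hCa).symm a
      = (⟨a, Submodule.mem_span_singleton_self a⟩, 0) := by
    rw [LinearEquiv.symm_apply_eq]
    rw [Submodule.coe_prodEquivOfIsCompl']
    simp
  rw [hσ]
  simp only [LinearEquiv.trans_apply]
  rw [h1]
  have h2 : σL ⟨a, Submodule.mem_span_singleton_self a⟩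
      = ⟨b, Submodule.mem_span_singleton_self b⟩ := by
    rw [hσL]
    have h3 : ea 1 = ⟨a, Submodule.mem_span_singleton_self a⟩ := by
      rw [hea]; exact LinearEquiv.toSpanNonzeroSingleton_one (ZMod p) V a ha'
    have h4 : ea.symm ⟨a, Submodule.mem_span_singleton_self a⟩ = 1 := by
      rw [LinearEquiv.symm_apply_eq, h3]
    simp only [LinearEquiv.trans_apply, h4]
    rw [heb]; exact LinearEquiv.toSpanNonzeroSingleton_one (ZMod p) V b hb'
  have h5 : (σL.prodCongr σC) (⟨a, Submodule.mem_span_singleton_self a⟩, 0)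
      = (⟨b, Submodule.mem_span_singleton_self b⟩, 0) := by
    simp only [LinearEquiv.prodCongr_apply]
    rw [h2]
    simp
  rw [h5]
  rw [Submodule.coe_prodEquivOfIsCompl']
  simp

theorem elab_move {G : Type*} [CommGroup G] [Finite G] {p : ℕ} [hp : Fact p.Prime]
    (htor : ∀ x : G, x ^ p = 1) {a b : G} (ha : a ≠ 1) (hb : b ≠ 1) :
    ∃ φ : G ≃* G, φ a = b := by
  haveI : NeZero p := ⟨hp.out.ne_zero⟩
  have htor' : ∀ x : Additive G, p • x = 0 := by
    intro x
    rw [← ofMul_toMul x, ← ofMul_pow, htor]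
    rfl
  letI : Module (ZMod p) (Additive G) := AddCommGroup.zmodModule htor'
  have ha' : (Additive.ofMul a : Additive G) ≠ 0 := fun h => ha (by simpa using h)
  have hb' : (Additive.ofMul b : Additive G) ≠ 0 := fun h => hb (by simpa using h)
  obtain ⟨σ, hσa⟩ := move_vec (p := p) ha' hb'
  refine ⟨{ toFun := fun g => (σ (Additive.ofMul g)).toMul
            invFun := fun g => (σ.symm (Additive.ofMul g)).toMul
            left_inv := fun g => congrArg Additive.toMul (σ.symm_apply_apply _)
            right_inv := fun g => congrArg Additive.toMul (σ.apply_symm_apply _)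
            map_mul' := fun x y => congrArg Additive.toMul (map_add σ _ _) }, ?_⟩
  exact congrArg Additive.toMul hσa

end Stmt5Helpers

open Stmt5Helpers in
/-- Taunt: Let `G` be a finite group whose only characteristic subgroups
are `⊥`, `N`, `⊤` (with `⊥ < N < ⊤`), and suppose `Aut(G)` fixes no non-trivial
element of `N` nor of `G/N`. Then for every `k ≥ 1`, the direct power `G^{×k}`
has `N^{×k}` as its unique non-trivial proper characteristic subgroup. -/
theorem stmt5 {G : Type*} [Group G] [Finite G]
    (N : Subgroup G) (hchar : N.Characteristic) (hbot : N ≠ ⊥) (htop : N ≠ ⊤)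
    (huniq : ∀ H : Subgroup G, H.Characteristic → H = ⊥ ∨ H = N ∨ H = ⊤)
    (hfixN : ∀ n : N, (∀ φ : G ≃* G, φ (n : G) = n) → (n : G) = 1)
    (hfixQ : ∀ x : G ⧸ N,
      (∀ (φ : G ≃* G) (h : N ≤ N.comap φ.toMonoidHom),
        QuotientGroup.map N N φ.toMonoidHom h x = x) → x = 1)
    (k : ℕ) (hk : 1 ≤ k) :
    (Subgroup.pi Set.univ (fun _ : Fin k => N)).Characteristic ∧
    Subgroup.pi Set.univ (fun _ : Fin k => N) ≠ ⊥ ∧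
    Subgroup.pi Set.univ (fun _ : Fin k => N) ≠ ⊤ ∧
    (∀ H : Subgroup (Fin k → G), H.Characteristic →
      H = ⊥ ∨ H = Subgroup.pi Set.univ (fun _ : Fin k => N) ∨ H = ⊤) := by
  classical
  have i0 : Fin k := ⟨0, hk⟩
  set M : Subgroup (Fin k → G) := Subgroup.pi Set.univ (fun _ : Fin k => N) with hMdef
  obtain ⟨a, haN, ha1⟩ : ∃ a ∈ N, a ≠ (1 : G) := by
    by_contra h
    push_neg at h
    exact hbot (Subgroup.eq_bot_iff_forall N |>.mpr h)
  obtain ⟨b, hbN⟩ : ∃ b : G, b ∉ N := by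
    by_contra h
    push_neg at h
    exact htop ((Subgroup.eq_top_iff' N).mpr h)
  have hb1 : b ≠ 1 := fun h => hbN (h ▸ one_mem N)
  have hMbot : M ≠ ⊥ := by
    intro h
    have hm : (fun _ : Fin k => a) ∈ M := (Subgroup.mem_pi _).mpr fun i _ => haN
    rw [h, Subgroup.mem_bot] at hm
    exact ha1 (congrFun hm i0)
  have hMtop : M ≠ ⊤ := by
    intro h
    have hm : (fun _ : Fin k => b) ∈ M := h ▸ Subgroup.mem_top _
    exact hbN ((Subgroup.mem_pi _).mp hm i0 trivial)
  have hclassify := classify N hchar huniq hfixN hfixQ hk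
  -- It suffices to produce some nontrivial proper characteristic subgroup of the power.
  suffices hexists : ∃ C : Subgroup (Fin k → G), C.Characteristic ∧ C ≠ ⊥ ∧ C ≠ ⊤ by
    obtain ⟨C, hCchar, hC1, hC2⟩ := hexists
    have hCM : C = M := by
      rcases hclassify C hCchar with h | h | h
      · exact absurd h hC1
      · exact h
      · exact absurd h hC2
    exact ⟨hCM ▸ hCchar, hMbot, hMtop, hclassify⟩
  -- Case analysis on the center of `G`.
  rcases huniq (Subgroup.center G) (Subgroup.centerCharacteristic) with hZ | hZ | hZ
  · -- `Z(G) = ⊥` : use the socle of the power.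
    -- First: the centralizer of `N` is contained in `N`.
    have hcentchar : (Subgroup.centralizer (N : Set G)).Characteristic := by
      rw [Subgroup.characteristic_iff_comap_eq]
      intro φ
      have hNiff : ∀ y : G, φ y ∈ N ↔ y ∈ N := by
        intro y
        conv_rhs => rw [← Subgroup.characteristic_iff_comap_eq.mp hchar φ]
        exact Iff.symm (Subgroup.mem_comap)
      ext x
      rw [Subgroup.mem_comap, Subgroup.mem_centralizer_iff, Subgroup.mem_centralizer_iff]
      constructor
      · intro hx n hn
        apply φ.injective
        rw [map_mul, map_mul]
        exact hx (φ n) ((hNiff n).mpr hn)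
      · intro hx n hn
        have : φ.symm n ∈ N := by
          rw [← hNiff (φ.symm n)]
          simpa using hn
        have h2 := hx (φ.symm n) this
        have h3 := congrArg φ h2
        rw [map_mul, map_mul] at h3
        simpa using h3
    have hcent : Subgroup.centralizer (N : Set G) ≤ N := by
      rcases huniq _ hcentchar with h | h | h
      · rw [h]; exact bot_le
      · rw [h]
      · exfalso
        apply hbot
        rw [Subgroup.eq_bot_iff_forall]
        intro n hn
        have : n ∈ Subgroup.center G := by
          rw [Subgroup.mem_center_iff]
          intro g
          have hg : g ∈ Subgroup.centralizer (N : Set G) := h ▸ Subgroup.mem_top g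
          exact (Subgroup.mem_centralizer_iff.mp hg n hn).symm
        rw [hZ, Subgroup.mem_bot] at this
        exact this
    haveI hMnormal : M.Normal := by
      constructor
      intro x hx g
      rw [Subgroup.mem_pi]
      intro i _
      have : (g * x * g⁻¹) i = g i * x i * (g i)⁻¹ := rfl
      rw [this]
      exact Subgroup.Normal.conj_mem inferInstance _
        ((Subgroup.mem_pi _).mp hx i trivial) (g i)
    set MinN : Set (Subgroup (Fin k → G)) :=
      {K | K.Normal ∧ K ≠ ⊥ ∧
        ∀ K' : Subgroup (Fin k → G), K'.Normal → K' ≤ K → K' = ⊥ ∨ K' = K} with hMinN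
    -- every minimal normal subgroup is contained in M
    have hKleM : ∀ K ∈ MinN, K ≤ M := by
      rintro K ⟨hKn, hKb, hKmin⟩
      haveI := hKn
      have hinf : (K ⊓ M).Normal := inferInstance
      rcases hKmin (K ⊓ M) hinf inf_le_left with hKM | hKM
      · exfalso
        apply hKb
        rw [Subgroup.eq_bot_iff_forall]
        intro x hx
        have hxM : x ∈ M := by
          rw [Subgroup.mem_pi]
          intro i _
          apply hcent
          rw [Subgroup.mem_centralizer_iff]
          intro n hn
          set s : Fin k → G := Pi.mulSingle i n with hs
          have hcomm1 : x * s * x⁻¹ * s⁻¹ ∈ K := by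
            have h1 : s * x⁻¹ * s⁻¹ ∈ K := hKn.conj_mem _ (inv_mem hx) s
            have h2 := mul_mem hx h1
            have h3 : x * (s * x⁻¹ * s⁻¹) = x * s * x⁻¹ * s⁻¹ := by
              simp [mul_assoc]
            rwa [h3] at h2
          have hcomm2 : x * s * x⁻¹ * s⁻¹ ∈ M := by
            rw [Subgroup.mem_pi]
            intro j _
            have he : (x * s * x⁻¹ * s⁻¹) j = x j * s j * (x j)⁻¹ * (s j)⁻¹ := rfl
            rw [he]
            by_cases hji : j = i
            · subst hji
              rw [hs]
              simp only [Pi.mulSingle_eq_same]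
              exact mul_mem (Subgroup.Normal.conj_mem inferInstance n hn (x j)) (inv_mem hn)
            · rw [hs, Pi.mulSingle_eq_of_ne hji]
              simp [one_mem]
          have hmem : x * s * x⁻¹ * s⁻¹ ∈ K ⊓ M := ⟨hcomm1, hcomm2⟩
          rw [hKM, Subgroup.mem_bot] at hmem
          have hcc := congrFun hmem i
          have hcc2 : x i * n * (x i)⁻¹ * n⁻¹ = 1 := by
            have he : (x * s * x⁻¹ * s⁻¹) i = x i * s i * (x i)⁻¹ * (s i)⁻¹ := rfl
            have hsi : s i = n := by rw [hs]; simp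
            rw [← hsi, ← he, hcc]
            rfl
          have hcc3 : x i * n = n * x i := by
            have := mul_eq_one_iff_eq_inv.mp hcc2
            -- x i * n * (x i)⁻¹ = (n⁻¹)⁻¹ = n
            rw [inv_inv] at this
            calc x i * n = (x i * n * (x i)⁻¹) * x i := by group
            _ = n * x i := by rw [this]
          exact hcc3.symm
        have hxKM : x ∈ K ⊓ M := ⟨hx, hxM⟩
        rw [hKM, Subgroup.mem_bot] at hxKM
        exact hxKM
      · rw [← hKM]
        exact inf_le_right
    -- `MinN` is nonempty
    haveI : Nontrivial (Fin k → G) :=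
      ⟨⟨(fun _ => a), 1, fun h => ha1 (congrFun h i0)⟩⟩
    obtain ⟨K0, hK0⟩ : ∃ K, K ∈ MinN := by
      haveI : WellFoundedLT (Subgroup (Fin k → G)) := Finite.to_wellFoundedLT
      set S : Set (Subgroup (Fin k → G)) := {K | K.Normal ∧ K ≠ ⊥} with hS
      have hStop : (⊤ : Subgroup (Fin k → G)) ∈ S := ⟨inferInstance, by simp⟩
      obtain ⟨m, hm, hmin⟩ :=
        (IsWellFounded.wf (r := (· < · : Subgroup (Fin k → G) → Subgroup (Fin k → G) → Prop))).has_min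
          S ⟨⊤, hStop⟩
      refine ⟨m, hm.1, hm.2, ?_⟩
      intro K' hK'n hK'le
      by_cases hK'b : K' = ⊥
      · exact Or.inl hK'b
      · right
        by_contra hne
        exact hmin K' ⟨hK'n, hK'b⟩ (lt_of_le_of_ne hK'le hne)
    set C : Subgroup (Fin k → G) := ⨆ K : MinN, (K : Subgroup (Fin k → G)) with hC
    have hmaps : ∀ (ψ : (Fin k → G) ≃* (Fin k → G)) (K : Subgroup (Fin k → G)), K ∈ MinN →
        Subgroup.map ψ.toMonoidHom K ∈ MinN := by
      rintro ψ K ⟨hKn, hKb, hKmin⟩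
      refine ⟨Subgroup.Normal.map hKn ψ.toMonoidHom ψ.surjective, ?_, ?_⟩
      · rw [Ne, Subgroup.map_eq_bot_iff_of_injective _ ψ.injective]
        exact hKb
      · intro K' hK'n hK'le
        haveI := hK'n
        have h1 : K'.comap ψ.toMonoidHom ≤ K := by
          have := Subgroup.comap_mono (f := ψ.toMonoidHom) hK'le
          rwa [Subgroup.comap_map_eq_self_of_injective ψ.injective] at this
        rcases hKmin _ (Subgroup.normal_comap ψ.toMonoidHom) h1 with h | h
        · left
          have := congrArg (Subgroup.map ψ.toMonoidHom) h
          rwa [Subgroup.map_comap_eq_self_of_surjective ψ.surjective, Subgroup.map_bot] at this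
        · right
          have := congrArg (Subgroup.map ψ.toMonoidHom) h
          rwa [Subgroup.map_comap_eq_self_of_surjective ψ.surjective] at this
    have hCchar : C.Characteristic := by
      rw [Subgroup.characteristic_iff_map_eq]
      intro ψ
      rw [hC, Subgroup.map_iSup]
      apply le_antisymm
      · apply iSup_le
        rintro ⟨K, hK⟩
        exact le_iSup_of_le ⟨Subgroup.map ψ.toMonoidHom K, hmaps ψ K hK⟩ le_rfl
      · apply iSup_le
        rintro ⟨K, hK⟩
        refine le_iSup_of_le ⟨K.comap ψ.toMonoidHom, ?_⟩ ?_
        · have h1 := hmaps ψ.symm K hK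
          have h2 : Subgroup.map ψ.symm.toMonoidHom K = Subgroup.comap ψ.toMonoidHom K := by
            rw [Subgroup.map_equiv_eq_comap_symm' ψ.symm]
            rfl
          rwa [h2] at h1
        · show K ≤ Subgroup.map ψ.toMonoidHom (K.comap ψ.toMonoidHom)
          rw [Subgroup.map_comap_eq_self_of_surjective ψ.surjective]
    refine ⟨C, hCchar, ?_, ?_⟩
    · intro h
      have : K0 ≤ C := le_iSup (fun K : MinN => (K : Subgroup (Fin k → G))) ⟨K0, hK0⟩
      rw [h, le_bot_iff] at this
      exact hK0.2.1 this
    · intro h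
      apply hMtop
      have hle : C ≤ M := by
        apply iSup_le
        rintro ⟨K, hK⟩
        exact hKleM K hK
      rw [h, top_le_iff] at hle
      exact hle
  · -- `Z(G) = N` : use the center of the power.
    refine ⟨Subgroup.center (Fin k → G), Subgroup.centerCharacteristic, ?_, ?_⟩
    · intro h
      have hm : (fun _ : Fin k => a) ∈ Subgroup.center (Fin k → G) := by
        rw [Subgroup.mem_center_iff]
        intro y
        funext i
        have ha' : a ∈ Subgroup.center G := hZ ▸ haN
        exact Subgroup.mem_center_iff.mp ha' (y i)
      rw [h, Subgroup.mem_bot] at hm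
      exact ha1 (congrFun hm i0)
    · intro h
      have hm : (fun _ : Fin k => b) ∈ Subgroup.center (Fin k → G) := h ▸ Subgroup.mem_top _
      have hbc : b ∈ Subgroup.center G := by
        rw [Subgroup.mem_center_iff]
        intro g
        have := Subgroup.mem_center_iff.mp hm (fun _ => g)
        exact congrFun this i0
      rw [hZ] at hbc
      exact hbN hbc
  · -- `Z(G) = ⊤` : `G` is abelian.
    have hcomm : ∀ x y : G, x * y = y * x := by
      intro x y
      have : y ∈ Subgroup.center G := hZ ▸ Subgroup.mem_top y
      exact Subgroup.mem_center_iff.mp this x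
    -- find an element of prime order in `N`
    haveI : Nontrivial N := ⟨⟨⟨a, haN⟩, 1, fun h => ha1 (congrArg Subtype.val h)⟩⟩
    haveI : Fintype N := Fintype.ofFinite N
    set p : ℕ := (Fintype.card N).minFac with hp
    have hpp : p.Prime := Nat.minFac_prime (Fintype.one_lt_card.ne')
    haveI : Fact p.Prime := ⟨hpp⟩
    obtain ⟨n, hn⟩ := exists_prime_orderOf_dvd_card (G := N) p (Nat.minFac_dvd _)
    set a2 : G := (n : G) with ha2def
    have horder : orderOf a2 = p := by
      rw [ha2def, orderOf_submonoid, hn]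
    have ha2N : a2 ∈ N := n.2
    have ha2 : a2 ≠ 1 := by
      intro h
      rw [h, orderOf_one] at horder
      exact hpp.one_lt.ne' horder.symm
    have ha2p : a2 ^ p = 1 := by
      rw [← horder]
      exact pow_orderOf_eq_one a2
    -- the subgroup of elements of order dividing p
    set Gp : Subgroup G :=
      { carrier := {x : G | x ^ p = 1}
        one_mem' := one_pow p
        mul_mem' := by
          intro x y hx hy
          show (x * y) ^ p = 1
          rw [Commute.mul_pow (hcomm x y)]
          rw [Set.mem_setOf_eq] at hx hy
          rw [hx, hy, one_mul]
        inv_mem' := by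
          intro x hx
          show (x⁻¹) ^ p = 1
          rw [Set.mem_setOf_eq] at hx
          rw [inv_pow, hx, inv_one] } with hGp
    have hGpmem : ∀ x : G, x ∈ Gp ↔ x ^ p = 1 := fun x => Iff.rfl
    have hGpchar : Gp.Characteristic := by
      rw [Subgroup.characteristic_iff_comap_eq]
      intro φ
      ext x
      rw [Subgroup.mem_comap]
      show (φ x) ^ p = 1 ↔ x ^ p = 1
      constructor
      · intro hx
        apply φ.injective
        rw [map_pow, map_one]
        exact hx
      · intro hx
        rw [← map_pow, hx, map_one]
    rcases huniq Gp hGpchar with h | h | h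
    · exfalso
      have : a2 ∈ Gp := (hGpmem a2).mpr ha2p
      rw [h, Subgroup.mem_bot] at this
      exact ha2 this
    · -- Gp = N : elements of order dividing p in the power
      set C : Subgroup (Fin k → G) := Subgroup.pi Set.univ (fun _ : Fin k => Gp) with hCdef
      have hCmem : ∀ x : Fin k → G, x ∈ C ↔ x ^ p = 1 := by
        intro x
        rw [hCdef, Subgroup.mem_pi]
        constructor
        · intro hx
          funext i
          have := hx i trivial
          rw [hGpmem] at this
          show (x ^ p) i = (1 : Fin k → G) i
          rw [Pi.pow_apply, Pi.one_apply, this]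
        · intro hx i _
          rw [hGpmem]
          have := congrFun hx i
          rwa [Pi.pow_apply, Pi.one_apply] at this
      have hCchar : C.Characteristic := by
        rw [Subgroup.characteristic_iff_comap_eq]
        intro ψ
        ext x
        rw [Subgroup.mem_comap, hCmem, hCmem]
        show (ψ x) ^ p = 1 ↔ x ^ p = 1
        constructor
        · intro hc
          apply ψ.injective
          rw [map_pow, map_one]
          exact hc
        · intro hc
          rw [← map_pow, hc, map_one]
      refine ⟨C, hCchar, ?_, ?_⟩
      · intro hcb
        have hm : (fun _ : Fin k => a2) ∈ C := by
          rw [hCmem]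
          funext i
          rw [Pi.pow_apply, Pi.one_apply]
          exact ha2p
        rw [hcb, Subgroup.mem_bot] at hm
        exact ha2 (congrFun hm i0)
      · intro hct
        have hbGp : b ∉ Gp := fun hc => hbN (h ▸ hc)
        have hm : (fun _ : Fin k => b) ∈ C := hct ▸ Subgroup.mem_top _
        rw [hCmem] at hm
        apply hbGp
        rw [hGpmem]
        have := congrFun hm i0
        rwa [Pi.pow_apply, Pi.one_apply] at this
    · -- Gp = ⊤ : G elementary abelian, contradiction with N characteristic
      exfalso
      letI : CommGroup G := { ‹Group G› with mul_comm := hcomm }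
      have htor : ∀ x : G, x ^ p = 1 := by
        intro x
        have : x ∈ Gp := h ▸ Subgroup.mem_top x
        exact (hGpmem x).mp this
      obtain ⟨φ, hφ⟩ := elab_move htor ha2 hb1
      have hcm := Subgroup.characteristic_iff_comap_eq.mp hchar φ
      have : φ a2 ∈ N := by
        have h2 : a2 ∈ N.comap φ.toMonoidHom := by rw [hcm]; exact ha2N
        exact Subgroup.mem_comap.mp h2
      rw [hφ] at this
      exact hbN this
end

section
/- Let L be a finite-dimensional non-abelian anti-commutative algebra with Z(L) = 0, and let I be a minimal ideal of L. If J is another ideal of L with I ∩ J = 0, then I·J = 0. Moreover, if the set of images of I under Aut(L) sums to L, then L is the internal direct sum of the distinct images of I under Aut(L). -/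
/-!
Anti-commutativity puts the product of two ideals into both of them, so ideals meeting
trivially annihilate each other. Automorphic images of a minimal ideal are minimal ideals,
and two distinct minimal ideals meet trivially. If one image `W` met the sum `K` of the
other images non-trivially, minimality would give `W ≤ K`, hence `K = L`; but `W`
annihilates `K`, so `W` would lie in the centre, which is zero.
-/

variable {F L : Type*} [Field F] [AddCommGroup L] [Module F L]

/-- A linear automorphism of `L` preserving the product `mul`. -/
def IsMulAut (mul : L →ₗ[F] L →ₗ[F] L) (e : L ≃ₗ[F] L) : Prop :=
  ∀ x y : L, e (mul x y) = mul (e x) (e y)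

/-- An ideal of the anti-commutative algebra `(L, mul)`. -/
def IsAlgIdeal (mul : L →ₗ[F] L →ₗ[F] L) (W : Submodule F L) : Prop :=
  ∀ x ∈ W, ∀ y : L, mul x y ∈ W

/-- A minimal (non-zero) ideal. -/
def IsMinIdeal (mul : L →ₗ[F] L →ₗ[F] L) (I : Submodule F L) : Prop :=
  IsAlgIdeal mul I ∧ I ≠ ⊥ ∧ ∀ J : Submodule F L, IsAlgIdeal mul J → J ≤ I → J = ⊥ ∨ J = I

section

variable {mul : L →ₗ[F] L →ₗ[F] L}

theorem mul_swap_eq_neg_of_alternating (halt : ∀ x : L, mul x x = 0) (x y : L) :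
    mul x y = -mul y x := by
  have h := halt (x + y)
  simp only [map_add, LinearMap.add_apply, halt, zero_add, add_zero] at h
  exact eq_neg_of_add_eq_zero_right h

theorem IsMulAut.symm {e : L ≃ₗ[F] L} (he : IsMulAut mul e) : IsMulAut mul e.symm :=
  fun x y => e.injective <| by rw [he]; simp

namespace IsAlgIdeal

theorem inf {I J : Submodule F L} (hI : IsAlgIdeal mul I) (hJ : IsAlgIdeal mul J) :
    IsAlgIdeal mul (I ⊓ J) :=
  fun x hx y => ⟨hI x hx.1 y, hJ x hx.2 y⟩

theorem map {e : L ≃ₗ[F] L} (he : IsMulAut mul e) {I : Submodule F L} (hI : IsAlgIdeal mul I) :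
    IsAlgIdeal mul (I.map (e : L →ₗ[F] L)) := by
  rintro _ ⟨x, hx, rfl⟩ y
  refine ⟨mul x (e.symm y), hI x hx _, ?_⟩
  rw [LinearEquiv.coe_coe, he, e.apply_symm_apply]

theorem mul_eq_zero_of_disjoint (halt : ∀ x : L, mul x x = 0) {I J : Submodule F L}
    (hI : IsAlgIdeal mul I) (hJ : IsAlgIdeal mul J) (hd : Disjoint I J)
    {x y : L} (hx : x ∈ I) (hy : y ∈ J) : mul x y = 0 := by
  have hyx : mul x y ∈ J := by
    rw [mul_swap_eq_neg_of_alternating halt]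
    exact J.neg_mem (hJ y hy x)
  exact (Submodule.disjoint_def.mp hd) _ (hI x hx y) hyx

end IsAlgIdeal

theorem isAlgIdeal_sSup {S : Set (Submodule F L)} (hS : ∀ W ∈ S, IsAlgIdeal mul W) :
    IsAlgIdeal mul (sSup S) := by
  intro x hx y
  have hle : sSup S ≤ (sSup S).comap (mul.flip y) :=
    sSup_le fun W hW w hw => le_sSup hW (hS W hW w hw y)
  exact hle hx

namespace IsMinIdeal

theorem map {e : L ≃ₗ[F] L} (he : IsMulAut mul e) {I : Submodule F L} (hI : IsMinIdeal mul I) :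
    IsMinIdeal mul (I.map (e : L →ₗ[F] L)) := by
  obtain ⟨hIdeal, hne, hmin⟩ := hI
  have map_symm_map (J : Submodule F L) :
      (J.map (e.symm : L →ₗ[F] L)).map (e : L →ₗ[F] L) = J := by
    simp [← Submodule.map_comp]
  refine ⟨hIdeal.map he, ?_, fun J hJ hJI => ?_⟩
  · rwa [Ne, Submodule.map_eq_bot_iff]
  · have hle : J.map (e.symm : L →ₗ[F] L) ≤ I := by
      rw [Submodule.map_le_iff_le_comap]
      intro x hx
      obtain ⟨i, hi, rfl⟩ := hJI hx
      simpa using hi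
    rcases hmin _ (hJ.map he.symm) hle with h | h
    · left; simpa [map_symm_map] using congrArg (Submodule.map (e : L →ₗ[F] L)) h
    · right; simpa [map_symm_map] using congrArg (Submodule.map (e : L →ₗ[F] L)) h

theorem disjoint_of_ne {W W' : Submodule F L} (hW : IsMinIdeal mul W) (hW' : IsMinIdeal mul W')
    (hne : W ≠ W') : Disjoint W W' := by
  rw [disjoint_iff]
  refine (hW'.2.2 _ (hW.1.inf hW'.1) inf_le_right).resolve_right fun h => ?_
  rcases hW.2.2 W' hW'.1 (inf_eq_right.mp h) with h' | h'
  · exact hW'.2.1 h'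
  · exact hne h'.symm

end IsMinIdeal

theorem mul_eq_zero_of_mem_sSup_sdiff (halt : ∀ x : L, mul x x = 0)
    {S : Set (Submodule F L)} (hS : ∀ W ∈ S, IsMinIdeal mul W) {W : Submodule F L} (hW : W ∈ S)
    {w k : L} (hw : w ∈ W) (hk : k ∈ sSup (S \ {W})) : mul w k = 0 := by
  have hle : sSup (S \ {W}) ≤ LinearMap.ker (mul w) := by
    refine sSup_le fun W' ⟨hW', hne⟩ k hk => ?_
    have hd := (hS W hW).disjoint_of_ne (hS W' hW') (Ne.symm hne)
    exact (hS W hW).1.mul_eq_zero_of_disjoint halt (hS W' hW').1 hd hw hk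
  exact hle hk

theorem sSupIndep_of_isMinIdeal_of_sSup_eq_top (halt : ∀ x : L, mul x x = 0)
    (hz : ∀ x : L, (∀ y : L, mul x y = 0) → x = 0)
    {S : Set (Submodule F L)} (hS : ∀ W ∈ S, IsMinIdeal mul W) (htop : sSup S = ⊤) :
    sSupIndep S := by
  intro W hW
  obtain ⟨hWideal, hWne, hWmin⟩ := hS W hW
  have hK : IsAlgIdeal mul (sSup (S \ {W})) := isAlgIdeal_sSup fun W' hW' => (hS W' hW'.1).1
  rw [disjoint_iff]
  refine (hWmin _ (hWideal.inf hK) inf_le_left).resolve_right fun h => hWne ?_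
  have hKtop : sSup (S \ {W}) = ⊤ := by
    rw [← htop, ← Set.insert_sdiff_self_of_mem hW, sSup_insert, Set.insert_sdiff_self_of_mem hW,
      sup_eq_right.mpr (inf_eq_left.mp h)]
  refine (Submodule.eq_bot_iff W).mpr fun w hw => hz w fun y => ?_
  exact mul_eq_zero_of_mem_sSup_sdiff halt hS hW hw (hKtop ▸ Submodule.mem_top)

end

theorem stmt8_general (mul : L →ₗ[F] L →ₗ[F] L)
    (halt : ∀ x : L, mul x x = 0)
    (hz : ∀ x : L, (∀ y : L, mul x y = 0) → x = 0)
    (I : Submodule F L) (hI : IsMinIdeal mul I) :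
    (∀ J : Submodule F L, IsAlgIdeal mul J → I ⊓ J = ⊥ →
        ∀ x ∈ I, ∀ y ∈ J, mul x y = 0) ∧
    (sSup {W : Submodule F L | ∃ e : L ≃ₗ[F] L, IsMulAut mul e ∧
        W = I.map (e : L →ₗ[F] L)} = ⊤ →
      sSupIndep {W : Submodule F L | ∃ e : L ≃ₗ[F] L, IsMulAut mul e ∧
        W = I.map (e : L →ₗ[F] L)} ∧
      sSup {W : Submodule F L | ∃ e : L ≃ₗ[F] L, IsMulAut mul e ∧
        W = I.map (e : L →ₗ[F] L)} = ⊤) := by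
  refine ⟨fun J hJ hd x hx y hy =>
    hI.1.mul_eq_zero_of_disjoint halt hJ (disjoint_iff.mpr hd) hx hy, fun htop => ⟨?_, htop⟩⟩
  refine sSupIndep_of_isMinIdeal_of_sSup_eq_top halt hz ?_ htop
  rintro W ⟨e, he, rfl⟩
  exact hI.map he

/-- Let `L` be a finite-dimensional non-abelian anti-commutative algebra
with `Z(L) = 0` and `I` a minimal ideal. (1) Any ideal `J` with `I ∩ J = 0`
satisfies `I·J = 0`. (2) If the images of `I` under `Aut(L)` sum to `L`, then `L`
is the internal direct sum of the distinct images of `I` under `Aut(L)`. -/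
theorem stmt8 (mul : L →ₗ[F] L →ₗ[F] L) [FiniteDimensional F L]
    (halt : ∀ x : L, mul x x = 0) (hna : ∃ x y : L, mul x y ≠ 0)
    (hz : ∀ x : L, (∀ y : L, mul x y = 0) → x = 0)
    (I : Submodule F L) (hI : IsMinIdeal mul I) :
    (∀ J : Submodule F L, IsAlgIdeal mul J → I ⊓ J = ⊥ →
        ∀ x ∈ I, ∀ y ∈ J, mul x y = 0) ∧
    (sSup {W : Submodule F L | ∃ e : L ≃ₗ[F] L, IsMulAut mul e ∧
        W = I.map (e : L →ₗ[F] L)} = ⊤ →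
      sSupIndep {W : Submodule F L | ∃ e : L ≃ₗ[F] L, IsMulAut mul e ∧
        W = I.map (e : L →ₗ[F] L)} ∧
      sSup {W : Submodule F L | ∃ e : L ≃ₗ[F] L, IsMulAut mul e ∧
        W = I.map (e : L →ₗ[F] L)} = ⊤) :=
  stmt8_general mul halt hz I hI
end

section
/- Let V₁ be a vector space over a field F, A₁ ≤ GL(V₁) a non-trivial subgroup, and P ≤ Sym(ℓ) a transitive subgroup. Then the wreath product A₁ ≀ P acting on V₁^{⊕ℓ} (componentwise with permutation of components) is irreducible if and only if A₁ is irreducible on V₁. -/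
/-!
If `A₁` is irreducible and non-trivial, no non-zero vector of `V₁` is fixed by all of `A₁`, since
the common fixed points form an `A₁`-stable subspace. So a non-zero `f` in a stable subspace `W`
of `V₁^ℓ` can be moved in a single coordinate `i` by an element of the base group, and the
difference between its image and `f` is a non-zero vector supported at `i`. The vectors `v`
with `Pi.single i v ∈ W` then form a non-zero `A₁`-stable subspace, hence all of `V₁`, and
transitivity of `P` moves this to every coordinate, so `W` contains every `Pi.single j v` and is
everything. Conversely, a stable subspace `U` of `V₁` gives the stable subspace `U^ℓ` of `V₁^ℓ`.
-/

theorem Submodule.eq_top_of_forall_single_mem {R ι : Type*} [Semiring R] [DecidableEq ι]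
    [Finite ι] {φ : ι → Type*} [∀ i, AddCommMonoid (φ i)] [∀ i, Module R (φ i)]
    {W : Submodule R (∀ i, φ i)} (h : ∀ i (v : φ i), Pi.single i v ∈ W) : W = ⊤ :=
  eq_top_iff.2 <| (LinearMap.iSup_range_single R φ).ge.trans <|
    iSup_le fun i => LinearMap.range_le_iff_comap.2 <| eq_top_iff.2 fun v _ => h i v

namespace Subgroup

variable {R V : Type*} [Ring R] [AddCommGroup V] [Module R V]

def Stabilizes (A : Subgroup (V ≃ₗ[R] V)) (U : Submodule R V) : Prop :=
  ∀ a ∈ A, ∀ v ∈ U, a v ∈ U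

def IsIrreducible (A : Subgroup (V ≃ₗ[R] V)) : Prop :=
  ∀ U : Submodule R V, A.Stabilizes U → U = ⊥ ∨ U = ⊤

/-- Stability of a submodule of `ι → V` under the wreath product `A ≀ P`, tested on the base
group `A^ι` and on the permutations in `P`. -/
def WreathStabilizes {ι : Type*} (A : Subgroup (V ≃ₗ[R] V)) (P : Subgroup (Equiv.Perm ι))
    (W : Submodule R (ι → V)) : Prop :=
  (∀ a : ι → (V ≃ₗ[R] V), (∀ i, a i ∈ A) → ∀ f ∈ W, (fun i => a i (f i)) ∈ W) ∧
    (∀ σ ∈ P, ∀ f ∈ W, (fun i => f (σ⁻¹ i)) ∈ W)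

theorem stabilizes_iInf_fixedSubmodule (A : Subgroup (V ≃ₗ[R] V)) :
    A.Stabilizes (⨅ a ∈ A, (a : V →ₗ[R] V).fixedSubmodule) := by
  intro a ha v hv
  simp only [Submodule.mem_iInf, LinearMap.mem_fixedSubmodule_iff, LinearEquiv.coe_coe] at hv ⊢
  intro b hb
  rw [hv a ha, hv b hb]

theorem IsIrreducible.exists_apply_ne {A : Subgroup (V ≃ₗ[R] V)} (hA : A.IsIrreducible)
    (hA_ne : A ≠ ⊥) {v : V} (hv : v ≠ 0) : ∃ a ∈ A, a v ≠ v := by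
  by_contra! hfix
  have hmem {w : V} : w ∈ ⨅ a ∈ A, (a : V →ₗ[R] V).fixedSubmodule ↔ ∀ a ∈ A, a w = w := by
    simp
  rcases hA _ (stabilizes_iInf_fixedSubmodule A) with hbot | htop
  · exact hv (by simpa [hbot] using hmem.2 hfix)
  · refine hA_ne ((eq_bot_iff_forall A).2 fun a ha => LinearEquiv.ext fun w => ?_)
    exact hmem.1 (htop ▸ Submodule.mem_top) a ha

section Wreath

variable {ι : Type*} {A : Subgroup (V ≃ₗ[R] V)} {P : Subgroup (Equiv.Perm ι)}
  {W : Submodule R (ι → V)}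

theorem WreathStabilizes.stabilizes_comap_single [DecidableEq ι] (hW : WreathStabilizes A P W)
    (i : ι) : A.Stabilizes (W.comap (LinearMap.single R (fun _ => V) i)) := by
  intro a ha v hv
  have hconst := hW.1 (fun _ => a) (fun _ => ha) (Pi.single i v) hv
  show Pi.single i (a v) ∈ W
  rwa [funext (Pi.apply_single (fun _ => a) (fun _ => map_zero a) i v)] at hconst

theorem WreathStabilizes.single_sub_mem [DecidableEq ι] (hW : WreathStabilizes A P W)
    {f : ι → V} (hf : f ∈ W) (i : ι) {a : V ≃ₗ[R] V} (ha : a ∈ A) :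
    Pi.single i (a (f i) - f i) ∈ W := by
  have hmoved := hW.1 (Function.update 1 i a)
    (fun j => by rcases eq_or_ne j i with rfl | hj <;> simp [*, one_mem]) f hf
  convert W.sub_mem hmoved hf using 1
  ext j
  rcases eq_or_ne j i with rfl | hj <;> simp [*]

theorem WreathStabilizes.single_mem_of_mem [DecidableEq ι] (hW : WreathStabilizes A P W)
    {σ : Equiv.Perm ι} (hσ : σ ∈ P) {i : ι} {v : V} (hv : Pi.single i v ∈ W) :
    Pi.single (σ i) v ∈ W := by
  have hperm := hW.2 σ hσ _ hv
  have hshift : (fun k => (Pi.single i v : ι → V) (σ⁻¹ k)) = Pi.single (σ i) v :=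
    Pi.single_comp_equiv σ.symm i v
  rwa [hshift] at hperm

end Wreath

theorem IsIrreducible.wreath {ι : Type*} [Finite ι] {A : Subgroup (V ≃ₗ[R] V)}
    (hA : A.IsIrreducible) (hA_ne : A ≠ ⊥) {P : Subgroup (Equiv.Perm ι)}
    (hP : ∀ i j : ι, ∃ σ ∈ P, σ i = j) (W : Submodule R (ι → V))
    (hW : WreathStabilizes A P W) : W = ⊥ ∨ W = ⊤ := by
  classical
  refine or_iff_not_imp_left.2 fun hW_ne => ?_
  obtain ⟨f, hf, hf_ne⟩ := (Submodule.ne_bot_iff W).1 hW_ne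
  obtain ⟨i, hfi⟩ := Function.ne_iff.1 hf_ne
  obtain ⟨a, ha, hafi⟩ := hA.exists_apply_ne hA_ne hfi
  have hcomap : W.comap (LinearMap.single R (fun _ => V) i) = ⊤ := by
    refine (hA _ (hW.stabilizes_comap_single i)).resolve_left fun hbot => hafi ?_
    have hdiff : a (f i) - f i ∈ W.comap (LinearMap.single R (fun _ => V) i) :=
      hW.single_sub_mem hf i ha
    rwa [hbot, Submodule.mem_bot, sub_eq_zero] at hdiff
  refine Submodule.eq_top_of_forall_single_mem fun j v => ?_
  obtain ⟨σ, hσ, rfl⟩ := hP i j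
  exact hW.single_mem_of_mem hσ (hcomap ▸ Submodule.mem_top : v ∈ _)

theorem IsIrreducible.of_wreath {ι : Type*} [Nonempty ι] {A : Subgroup (V ≃ₗ[R] V)}
    {P : Subgroup (Equiv.Perm ι)}
    (h : ∀ W : Submodule R (ι → V), WreathStabilizes A P W → W = ⊥ ∨ W = ⊤) :
    A.IsIrreducible := by
  intro U hU
  have hconst {v : V} : (fun _ : ι => v) ∈ Submodule.pi Set.univ (fun _ => U) ↔ v ∈ U := by
    simp
  rcases h (Submodule.pi Set.univ fun _ => U)
      ⟨fun a ha f hf i _ => hU (a i) (ha i) (f i) (hf i trivial),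
        fun σ _ f hf i _ => hf (σ⁻¹ i) trivial⟩ with hbot | htop
  · refine Or.inl (eq_bot_iff.2 fun v hv => ?_)
    have hzero := hconst.2 hv
    rw [hbot, Submodule.mem_bot] at hzero
    exact Function.const_eq_zero.1 hzero
  · exact Or.inr (eq_top_iff.2 fun v _ => hconst.1 (htop ▸ Submodule.mem_top))

end Subgroup

/-- Clifford: Let `V₁` be a vector space over a field `F`,
`A₁ ≤ GL(V₁)` a non-trivial subgroup and `P ≤ Sym(ℓ)` a transitive subgroup.
The wreath product `A₁ ≀ P` acting on `V₁^{⊕ℓ}` (the base group acting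
componentwise, `P` permuting the summands) is irreducible if and only if `A₁`
is irreducible on `V₁`. -/
theorem stmt11 {F V₁ : Type*} [Field F] [AddCommGroup V₁] [Module F V₁]
    (A₁ : Subgroup (V₁ ≃ₗ[F] V₁)) (hA₁ : A₁ ≠ ⊥)
    (ℓ : ℕ) (hl : 1 ≤ ℓ)
    (P : Subgroup (Equiv.Perm (Fin ℓ)))
    (htrans : ∀ i j : Fin ℓ, ∃ σ ∈ P, σ i = j) :
    (∀ W : Submodule F (Fin ℓ → V₁),
        ((∀ a : Fin ℓ → (V₁ ≃ₗ[F] V₁), (∀ i, a i ∈ A₁) →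
            ∀ f ∈ W, (fun i => a i (f i)) ∈ W) ∧
         (∀ σ ∈ P, ∀ f ∈ W, (fun i => f (σ⁻¹ i)) ∈ W)) →
        W = ⊥ ∨ W = ⊤) ↔
      (∀ U : Submodule F V₁,
        (∀ a ∈ A₁, ∀ v ∈ U, a v ∈ U) → U = ⊥ ∨ U = ⊤) :=
  have : Nonempty (Fin ℓ) := ⟨⟨0, hl⟩⟩
  ⟨Subgroup.IsIrreducible.of_wreath, fun hA => Subgroup.IsIrreducible.wreath hA hA₁ htrans⟩
end

section
/- Let G be a finite UCS p-group of odd exponent p² and H a subgroup with Φ(G) ≤ H ≤ G. Then H is powerful (i.e. H' ≤ H^p) if and only if the image H/Φ(G) is a subalgebra of the anti-commutative algebra L(G) on G/Φ(G). This gives a bijection between subalgebras of L(G) and powerful subgroups of G containing Φ(G). -/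
/-!
The centre of `G` is a nontrivial characteristic subgroup, so it contains `Φ(G)`; as every
commutator lies in `Φ(G)`, `G` has class at most two. Elements of `Φ(G)` are `p`-th powers, so
they have order dividing `p`, and for odd `p` the class-two identity
`(xy)^n = x^n y^n [y,x]^(n choose 2)` makes `x ↦ x^p` a homomorphism. Hence `H^p` is just the
set of `p`-th powers of elements of `H`, and injectivity of `f` turns `[x,y] ∈ H^p` into
`x̄ ȳ ∈ H/Φ(G)`. The bijection is the correspondence theorem for `G → G/Φ(G)`.
-/

open scoped commutatorElement

theorem Odd.dvd_choose_two {n : ℕ} (hn : Odd n) : n ∣ n.choose 2 := by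
  obtain ⟨k, rfl⟩ := hn
  exact ⟨k, by rw [Nat.choose_two_right, Nat.add_sub_cancel, mul_comm 2 k, ← mul_assoc,
    Nat.mul_div_cancel _ two_pos]⟩

section CentralCommutator

variable {G : Type*} [Group G] {x y : G}

theorem pow_mul_eq_mul_pow_mul_commutator_pow (hc : ∀ z : G, Commute ⁅y, x⁆ z) (k : ℕ) :
    y ^ k * x = x * y ^ k * ⁅y, x⁆ ^ k := by
  induction k with
  | zero => simp
  | succ k ih =>
    have hyx : y * x = x * y * ⁅y, x⁆ := by
      rw [← (hc (x * y)).eq, commutatorElement_def]; group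
    calc y ^ (k + 1) * x = y ^ k * x * y * ⁅y, x⁆ := by simp only [pow_succ, mul_assoc, hyx]
      _ = x * y ^ k * (⁅y, x⁆ ^ k * y) * ⁅y, x⁆ := by simp only [ih, mul_assoc]
      _ = x * y ^ (k + 1) * ⁅y, x⁆ ^ (k + 1) := by
        simp only [((hc y).pow_left k).eq, pow_succ, mul_assoc]

theorem mul_pow_eq_mul_pow_mul_commutator_pow (hc : ∀ z : G, Commute ⁅y, x⁆ z) (n : ℕ) :
    (x * y) ^ n = x ^ n * y ^ n * ⁅y, x⁆ ^ n.choose 2 := by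
  induction n with
  | zero => simp
  | succ n ih =>
    have hchoose : (n + 1).choose 2 = n + n.choose 2 := by
      rw [Nat.choose_succ_succ', Nat.choose_one_right]
    calc (x * y) ^ (n + 1) = x ^ n * y ^ n * (⁅y, x⁆ ^ n.choose 2 * (x * y)) := by
          rw [pow_succ, ih, mul_assoc]
      _ = x ^ n * (y ^ n * x) * y * ⁅y, x⁆ ^ n.choose 2 := by
          simp only [((hc (x * y)).pow_left _).eq, mul_assoc]
      _ = x ^ n * x * y ^ n * (⁅y, x⁆ ^ n * y) * ⁅y, x⁆ ^ n.choose 2 := by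
          simp only [pow_mul_eq_mul_pow_mul_commutator_pow hc, mul_assoc]
      _ = x ^ (n + 1) * y ^ (n + 1) * ⁅y, x⁆ ^ (n + 1).choose 2 := by
          simp only [((hc y).pow_left n).eq, hchoose, pow_add, pow_succ, mul_assoc]

theorem mul_pow_of_odd {n : ℕ} (hn : Odd n) (hc : ∀ z : G, Commute ⁅y, x⁆ z)
    (hcn : ⁅y, x⁆ ^ n = 1) : (x * y) ^ n = x ^ n * y ^ n := by
  obtain ⟨k, hk⟩ := hn.dvd_choose_two
  rw [mul_pow_eq_mul_pow_mul_commutator_pow hc, hk, pow_mul, hcn, one_pow, mul_one]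

end CentralCommutator

theorem Subgroup.mem_closure_pow_set_iff {G : Type*} [Group G] {n : ℕ}
    (hmul : ∀ x y : G, (x * y) ^ n = x ^ n * y ^ n) (H : Subgroup G) {z : G} :
    z ∈ closure {x : G | ∃ h ∈ H, x = h ^ n} ↔ ∃ h ∈ H, z = h ^ n := by
  have hpowers : {x : G | ∃ h ∈ H, x = h ^ n} = H.map (MonoidHom.mk' (· ^ n) hmul) := by
    ext; simp [eq_comm]
  rw [hpowers, closure_eq, mem_map]
  simp [eq_comm]

theorem IsPGroup.frattini_le_center {p : ℕ} [Fact p.Prime] {G : Type*} [Group G] [Finite G]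
    [Nontrivial G] (hp : IsPGroup p G)
    (hchar : ∀ H : Subgroup G, H.Characteristic → H = ⊥ ∨ H = frattini G ∨ H = ⊤) :
    frattini G ≤ Subgroup.center G := by
  rcases hchar (Subgroup.center G) inferInstance with h | h | h
  · exact absurd h hp.bot_lt_center.ne'
  · exact h.ge
  · exact h ▸ le_top

section PowerBijection

variable {p : ℕ} {G : Type*} [Group G] {N : Subgroup G} [N.Normal] {f : G ⧸ N → N}
  {m : G ⧸ N → G ⧸ N → G ⧸ N}

theorem mem_map_mk_iff_commutator_eq_pow (hf : ∀ x : G, (f (x : G ⧸ N) : G) = x ^ p)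
    (hinj : Function.Injective f) (hm : ∀ x y : G, (f (m x y) : G) = ⁅x, y⁆)
    (H : Subgroup G) (x y : G) :
    m x y ∈ H.map (QuotientGroup.mk' N) ↔ ∃ h ∈ H, ⁅x, y⁆ = h ^ p := by
  simp only [Subgroup.mem_map, QuotientGroup.mk'_apply]
  refine exists_congr fun h => and_congr_right fun _ => ?_
  rw [← hinj.eq_iff, Subtype.ext_iff, hf, hm, eq_comm]

theorem commutator_le_closure_pow_iff (hf : ∀ x : G, (f (x : G ⧸ N) : G) = x ^ p)
    (hinj : Function.Injective f) (hm : ∀ x y : G, (f (m x y) : G) = ⁅x, y⁆)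
    (hmul : ∀ x y : G, (x * y) ^ p = x ^ p * y ^ p) (H : Subgroup G) :
    ⁅H, H⁆ ≤ Subgroup.closure {x : G | ∃ h ∈ H, x = h ^ p} ↔
      ∀ a ∈ H.map (QuotientGroup.mk' N), ∀ b ∈ H.map (QuotientGroup.mk' N),
        m a b ∈ H.map (QuotientGroup.mk' N) := by
  simp only [Subgroup.commutator_le, Subgroup.mem_closure_pow_set_iff hmul,
    ← mem_map_mk_iff_commutator_eq_pow hf hinj hm]
  simp only [Subgroup.mem_map, forall_exists_index, and_imp, forall_apply_eq_imp_iff₂,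
    QuotientGroup.mk'_apply]

end PowerBijection

/-- Let `G` be a finite UCS `p`-group of odd exponent `p²`, with the
`p`-th power bijection `f : G/Φ(G) → Φ(G)` and the algebra product `m` on
`G/Φ(G)` given by `f (m x̄ ȳ) = [x,y]`. Then a subgroup `H` with
`Φ(G) ≤ H ≤ G` is powerful (`H' ≤ H^p`) iff `H/Φ(G)` is a subalgebra of `L(G)`;
moreover `H ↦ H/Φ(G)` is a bijection between powerful subgroups of `G` containing
`Φ(G)` and subalgebras of `L(G)`. -/
theorem stmt12 {p : ℕ} [Fact p.Prime] (hodd : Odd p)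
    {G : Type*} [Group G] [Finite G] (hp : IsPGroup p G)
    (hexp : Monoid.exponent G = p ^ 2)
    (hucs : ∀ H : Subgroup G, H.Characteristic → H = ⊥ ∨ H = frattini G ∨ H = ⊤)
    (f : G ⧸ frattini G → frattini G)
    (hf : ∀ x : G, (f ((x : G ⧸ frattini G)) : G) = x ^ p)
    (hbij : Function.Bijective f)
    (m : G ⧸ frattini G → G ⧸ frattini G → G ⧸ frattini G)
    (hm : ∀ x y : G, (f (m x y) : G) = ⁅x, y⁆) :
    (∀ H : Subgroup G, frattini G ≤ H →
      (⁅H, H⁆ ≤ Subgroup.closure {x : G | ∃ h ∈ H, x = h ^ p} ↔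
        ∀ a ∈ H.map (QuotientGroup.mk' (frattini G)),
          ∀ b ∈ H.map (QuotientGroup.mk' (frattini G)),
            m a b ∈ H.map (QuotientGroup.mk' (frattini G)))) ∧
    -- the correspondence `H ↦ H/Φ(G)` is injective ...
    (∀ H₁ H₂ : Subgroup G, frattini G ≤ H₁ → frattini G ≤ H₂ →
      H₁.map (QuotientGroup.mk' (frattini G)) = H₂.map (QuotientGroup.mk' (frattini G)) →
      H₁ = H₂) ∧
    -- ... and maps the powerful subgroups containing `Φ(G)` onto the subalgebras
    (∀ S : Subgroup (G ⧸ frattini G), (∀ a ∈ S, ∀ b ∈ S, m a b ∈ S) →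
      ∃ H : Subgroup G, frattini G ≤ H ∧
        ⁅H, H⁆ ≤ Subgroup.closure {x : G | ∃ h ∈ H, x = h ^ p} ∧
        H.map (QuotientGroup.mk' (frattini G)) = S) := by
  have : Nontrivial G := by
    rw [← not_subsingleton_iff_nontrivial, ← Monoid.exp_eq_one_iff, hexp]
    exact (Nat.one_lt_pow two_ne_zero (Fact.out : p.Prime).one_lt).ne'
  have hcomm_mem : ∀ x y : G, ⁅x, y⁆ ∈ frattini G := fun x y => hm x y ▸ (f (m x y)).2
  have hpow_frattini : ∀ z ∈ frattini G, z ^ p = 1 := by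
    intro z hz
    obtain ⟨c, hc⟩ := hbij.2 ⟨z, hz⟩
    obtain ⟨x, rfl⟩ := QuotientGroup.mk_surjective c
    have hz_pow : z = x ^ p := by rw [← hf, hc]
    rw [hz_pow, ← pow_mul, ← sq, ← hexp, Monoid.pow_exponent_eq_one]
  have hmul : ∀ x y : G, (x * y) ^ p = x ^ p * y ^ p := fun x y =>
    mul_pow_of_odd hodd
      (fun z => (Subgroup.mem_center_iff.mp (hp.frattini_le_center hucs (hcomm_mem y x)) z).symm)
      (hpow_frattini _ (hcomm_mem y x))
  have hpowerful := commutator_le_closure_pow_iff hf hbij.1 hm hmul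
  refine ⟨fun H _ => hpowerful H, fun H₁ H₂ h₁ h₂ => ?_, fun S hS => ?_⟩
  · rw [← QuotientGroup.ker_mk' (frattini G)] at h₁ h₂
    exact Subgroup.map_injective_of_ker_le _ h₁ h₂
  · have hmap := Subgroup.map_comap_eq_self_of_surjective (QuotientGroup.mk'_surjective _) S
    refine ⟨S.comap (QuotientGroup.mk' _), ?_, (hpowerful _).mpr (by rwa [hmap]), hmap⟩
    simpa using (QuotientGroup.mk' (frattini G)).ker_le_comap S
end

section
/- Let G be a finite UCS p-group of odd exponent p² and H a subgroup with Φ(G) ≤ H ≤ G. Then H is powerfully embedded in G (i.e. [H,G] ≤ H^p) if and only if H/Φ(G) is an ideal of the anti-commutative algebra L(G). -/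
open scoped commutatorElement

/-!
Since `Φ(G)` is the only proper nontrivial characteristic subgroup, `[G, G] ≤ Φ(G) ≤ Z(G)`, and
`Φ(G)` consists of `p`-th powers, so it has exponent `p`. In class two,
`(xy)^n = x^n y^n [y, x]^(n choose 2)`, and `p ∣ p choose 2` for odd `p`, so `x ↦ x^p` is an
endomorphism: `H^p` is just the set of `p`-th powers of elements of `H`. By injectivity of the
`p`-th power bijection, `[x, y] = h^p` iff `⟨x̄, ȳ⟩ = h̄`, which turns one condition into the other.
-/

section CommutatorCentral

variable {G : Type*} [Group G] {x y : G}

lemma pow_mul_eq_mul_pow_mul_commutatorElement_pow (hc : ⁅y, x⁆ ∈ Subgroup.center G) (n : ℕ) :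
    y ^ n * x = x * y ^ n * ⁅y, x⁆ ^ n := by
  have hcomm : ∀ g, Commute ⁅y, x⁆ g := fun g => (Subgroup.mem_center_iff.mp hc g).symm
  have hconj : SemiconjBy x (y * ⁅y, x⁆) y := by
    change x * (y * ⁅y, x⁆) = y * x
    rw [← (hcomm y).eq, ← mul_assoc, ← (hcomm x).eq, commutatorElement_def]
    group
  rw [mul_assoc, ← (hcomm y).symm.mul_pow, (hconj.pow_right n).eq]

lemma mul_pow_eq_mul_pow_mul_commutatorElement_pow_choose (hc : ⁅y, x⁆ ∈ Subgroup.center G)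
    (n : ℕ) : (x * y) ^ n = x ^ n * y ^ n * ⁅y, x⁆ ^ n.choose 2 := by
  have hcomm : ∀ g, Commute ⁅y, x⁆ g := fun g => (Subgroup.mem_center_iff.mp hc g).symm
  induction n with
  | zero => simp
  | succ n ih =>
    calc (x * y) ^ (n + 1) = x ^ n * y ^ n * ⁅y, x⁆ ^ n.choose 2 * (x * y) := by
          rw [pow_succ, ih]
      _ = x ^ n * (y ^ n * x) * y * ⁅y, x⁆ ^ n.choose 2 := by
          rw [mul_assoc _ _ (x * y), ((hcomm _).pow_left _).eq]; simp only [mul_assoc]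
      _ = x ^ n * x * y ^ n * (⁅y, x⁆ ^ n * y) * ⁅y, x⁆ ^ n.choose 2 := by
          rw [pow_mul_eq_mul_pow_mul_commutatorElement_pow hc]; simp only [mul_assoc]
      _ = x ^ (n + 1) * y ^ (n + 1) * ⁅y, x⁆ ^ (n + 1).choose 2 := by
          have hchoose : (n + 1).choose 2 = n + n.choose 2 := by
            rw [Nat.choose_succ_succ', Nat.choose_one_right]
          rw [((hcomm y).pow_left n).eq, hchoose, pow_succ x, pow_succ y, pow_add]
          simp only [mul_assoc]

lemma mul_pow_eq_mul_pow_of_odd {n : ℕ} (hn : Odd n) (hc : ⁅y, x⁆ ∈ Subgroup.center G)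
    (hcn : ⁅y, x⁆ ^ n = 1) : (x * y) ^ n = x ^ n * y ^ n := by
  obtain ⟨k, rfl⟩ := hn
  have hchoose : (2 * k + 1).choose 2 = (2 * k + 1) * k := by
    rw [Nat.choose_two_right, Nat.add_sub_cancel, mul_left_comm, Nat.mul_div_cancel_left _ two_pos]
  rw [mul_pow_eq_mul_pow_mul_commutatorElement_pow_choose hc, hchoose, pow_mul, hcn, one_pow,
    mul_one]

end CommutatorCentral

lemma mem_closure_setOf_pow_iff {G : Type*} [Group G] {n : ℕ}
    (hmul : ∀ x y : G, (x * y) ^ n = x ^ n * y ^ n) (H : Subgroup G) {g : G} :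
    g ∈ Subgroup.closure {x : G | ∃ h ∈ H, x = h ^ n} ↔ ∃ h ∈ H, g = h ^ n := by
  have hset : {x : G | ∃ h ∈ H, x = h ^ n} = H.map (MonoidHom.mk' (· ^ n) hmul) := by
    ext; simp [eq_comm]
  rw [hset, Subgroup.closure_eq]
  simp [eq_comm]

lemma commutator_ne_top {G : Type*} [Group G] [Nontrivial G] [Group.IsNilpotent G] :
    commutator G ≠ ⊤ := by
  intro htop
  have hseries : ∀ n, (⊤ : Subgroup G).lowerCentralSeries n = ⊤ := by
    intro n
    induction n with
    | zero => rfl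
    | succ n ih => rw [Subgroup.lowerCentralSeries_succ, ih]; exact htop
  obtain ⟨n, hn⟩ := Subgroup.nilpotent_iff_lowerCentralSeries.mp ‹Group.IsNilpotent G›
  exact top_ne_bot ((hseries n).symm.trans hn)

section UCS

variable {p : ℕ} [Fact p.Prime] {G : Type*} [Group G] [Finite G] [Nontrivial G] (hp : IsPGroup p G)
  (hucs : ∀ H : Subgroup G, H.Characteristic → H = ⊥ ∨ H = frattini G ∨ H = ⊤)
include hp hucs

lemma commutator_le_frattini : commutator G ≤ frattini G := by
  have := hp.isNilpotent
  rcases hucs (commutator G) inferInstance with h | h | h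
  · exact h ▸ bot_le
  · exact h.le
  · exact absurd h commutator_ne_top

lemma commutator_le_center : commutator G ≤ Subgroup.center G := by
  rcases hucs (Subgroup.center G) inferInstance with h | h | h
  · have := hp.center_nontrivial
    rw [h] at this
    exact absurd this (not_nontrivial_iff_subsingleton.mpr inferInstance)
  · exact h ▸ commutator_le_frattini hp hucs
  · exact h ▸ le_top

end UCS

lemma QuotientGroup.mk_mem_map_mk'_iff {G : Type*} [Group G] {N H : Subgroup G} [N.Normal]
    (hNH : N ≤ H) {x : G} : (x : G ⧸ N) ∈ H.map (QuotientGroup.mk' N) ↔ x ∈ H :=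
  SetLike.ext_iff.mp (Subgroup.comap_map_eq_self (by rwa [QuotientGroup.ker_mk'])) x

section PowerBijection

variable {p : ℕ} {G : Type*} [Group G] {f : G ⧸ frattini G → frattini G}
  (hf : ∀ x : G, (f ((x : G ⧸ frattini G)) : G) = x ^ p)
include hf

lemma pow_eq_one_of_mem_frattini (hexp : Monoid.exponent G = p ^ 2)
    (hsurj : Function.Surjective f) {g : G} (hg : g ∈ frattini G) : g ^ p = 1 := by
  obtain ⟨q, hq⟩ := hsurj ⟨g, hg⟩
  obtain ⟨z, rfl⟩ := QuotientGroup.mk_surjective q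
  have hgz : g = z ^ p := by rw [← hf, hq]
  rw [hgz, ← pow_mul, ← sq, ← hexp, Monoid.pow_exponent_eq_one]

lemma bracket_mem_map_mk_iff (hinj : Function.Injective f)
    {m : G ⧸ frattini G → G ⧸ frattini G → G ⧸ frattini G}
    (hm : ∀ x y : G, (f (m x y) : G) = ⁅x, y⁆) (H : Subgroup G) (x y : G) :
    m x y ∈ H.map (QuotientGroup.mk' (frattini G)) ↔ ∃ h ∈ H, ⁅x, y⁆ = h ^ p := by
  simp only [Subgroup.mem_map, QuotientGroup.mk'_apply, ← hinj.eq_iff, Subtype.ext_iff, hm, hf,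
    eq_comm]

end PowerBijection

/-- Let `G` be a finite UCS `p`-group of odd exponent `p²`, with the
`p`-th power bijection `f : G/Φ(G) → Φ(G)` and the algebra product `m` on
`G/Φ(G)` given by `f (m x̄ ȳ) = [x,y]`. Then a subgroup `H` with `Φ(G) ≤ H ≤ G`
is powerfully embedded in `G` (`[H,G] ≤ H^p`) iff `H/Φ(G)` is an ideal of the
algebra `L(G)`. -/
theorem stmt13 {p : ℕ} [Fact p.Prime] (hodd : Odd p)
    {G : Type*} [Group G] [Finite G] (hp : IsPGroup p G)
    (hexp : Monoid.exponent G = p ^ 2)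
    (hucs : ∀ H : Subgroup G, H.Characteristic → H = ⊥ ∨ H = frattini G ∨ H = ⊤)
    (f : G ⧸ frattini G → frattini G)
    (hf : ∀ x : G, (f ((x : G ⧸ frattini G)) : G) = x ^ p)
    (hbij : Function.Bijective f)
    (m : G ⧸ frattini G → G ⧸ frattini G → G ⧸ frattini G)
    (hm : ∀ x y : G, (f (m x y) : G) = ⁅x, y⁆) :
    ∀ H : Subgroup G, frattini G ≤ H →
      (⁅H, (⊤ : Subgroup G)⁆ ≤ Subgroup.closure {x : G | ∃ h ∈ H, x = h ^ p} ↔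
        ∀ a ∈ H.map (QuotientGroup.mk' (frattini G)),
          ∀ b : G ⧸ frattini G,
            m a b ∈ H.map (QuotientGroup.mk' (frattini G))) := by
  intro H hΦH
  have : Nontrivial G := by
    rw [← not_subsingleton_iff_nontrivial, ← Monoid.exp_eq_one_iff, hexp]
    exact (Nat.one_lt_pow two_ne_zero (Fact.out : p.Prime).one_lt).ne'
  have hmul : ∀ x y : G, (x * y) ^ p = x ^ p * y ^ p := fun x y =>
    have hyx : ⁅y, x⁆ ∈ commutator G := Subgroup.commutator_mem_commutator trivial trivial
    mul_pow_eq_mul_pow_of_odd hodd (commutator_le_center hp hucs hyx)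
      (pow_eq_one_of_mem_frattini hf hexp hbij.2 (commutator_le_frattini hp hucs hyx))
  simp only [Subgroup.commutator_le, Subgroup.mem_top, forall_const, mem_closure_setOf_pow_iff hmul,
    QuotientGroup.forall_mk, QuotientGroup.mk_mem_map_mk'_iff hΦH, bracket_mem_map_mk_iff hf hbij.1 hm]
end

section
/- Let F be a field with char F ≠ 2, let e₁,e₂,e₃ be a basis of a 3-dimensional anti-commutative algebra L, set f₁ = e₂·e₃, f₂ = e₃·e₁, f₃ = e₁·e₂, and suppose f₁,f₂,f₃ also form a basis with f_i = Σ_j a_{ij} e_j. Then L satisfies the Jacobi identity if and only if the matrix A = (a_{ij}) is symmetric. -/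
/-!
The Jacobiator `J(x, y, z)` is trilinear and, since the product is alternating, alternating
as well; on a 3-dimensional space it therefore vanishes identically iff `J(e₁, e₂, e₃) = 0`.
Expanding `J(e₁, e₂, e₃) = Σᵢ eᵢ·fᵢ = Σᵢⱼ aᵢⱼ eᵢ·eⱼ` gives
`(a₂₃ - a₃₂) f₁ + (a₃₁ - a₁₃) f₂ + (a₁₂ - a₂₁) f₃`, which vanishes iff `A` is symmetric because
the `fᵢ` are linearly independent.
-/

open Module

theorem Matrix.isSymm_fin_three_iff {α : Type*} {a : Matrix (Fin 3) (Fin 3) α} :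
    a.IsSymm ↔ a 1 2 = a 2 1 ∧ a 2 0 = a 0 2 ∧ a 0 1 = a 1 0 := by
  simp only [IsSymm.ext_iff, Fin.forall_fin_succ, Fin.isValue, Fin.succ_zero_eq_one,
    Fin.succ_one_eq_two, IsEmpty.forall_iff, and_true, true_and]
  grind

theorem LinearIndependent.smul_add_smul_add_smul_eq_zero_iff {R L : Type*} [Ring R]
    [AddCommGroup L] [Module R L] {f : Fin 3 → L} (hf : LinearIndependent R f) {a b c : R} :
    a • f 0 + b • f 1 + c • f 2 = 0 ↔ a = 0 ∧ b = 0 ∧ c = 0 := by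
  refine ⟨fun h ↦ ?_, fun ⟨ha, hb, hc⟩ ↦ by simp [ha, hb, hc]⟩
  have hcoeff := Fintype.linearIndependent_iff.mp hf ![a, b, c]
    (by simpa [Fin.sum_univ_three] using h)
  exact ⟨hcoeff 0, hcoeff 1, hcoeff 2⟩

section Jacobiator

variable {R L : Type*} [CommRing R] [AddCommGroup L] [Module R L] (mul : L →ₗ[R] L →ₗ[R] L)

def jacobiator (x y z : L) : L :=
  mul x (mul y z) + mul y (mul z x) + mul z (mul x y)

def jacobiatorLeft (y z : L) : L →ₗ[R] L :=
  mul.flip (mul y z) + mul y ∘ₗ mul z + mul z ∘ₗ mul.flip y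

theorem jacobiatorLeft_apply (x y z : L) : jacobiatorLeft mul y z x = jacobiator mul x y z :=
  rfl

theorem jacobiator_cycle (x y z : L) : jacobiator mul x y z = jacobiator mul y z x := by
  simp only [jacobiator]
  abel

-- Linearity in the first argument plus cyclic symmetry gives linearity in each argument.
theorem jacobiator_eq_zero_of_basis {ι : Type*} (e : Basis ι R L)
    (h : ∀ i j k, jacobiator mul (e i) (e j) (e k) = 0) (x y z : L) :
    jacobiator mul x y z = 0 := by
  have extend {y z : L} (hyz : ∀ i, jacobiator mul (e i) y z = 0) (x : L) :
      jacobiator mul x y z = 0 := by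
    rw [← jacobiatorLeft_apply, e.ext (f₁ := jacobiatorLeft mul y z) (f₂ := 0) hyz,
      LinearMap.zero_apply]
  have h₁ (x : L) (j k : ι) : jacobiator mul (e j) (e k) x = 0 := by
    rw [jacobiator_cycle, jacobiator_cycle]
    exact extend (fun i ↦ h i j k) x
  have h₂ (x y : L) (k : ι) : jacobiator mul (e k) x y = 0 := by
    rw [jacobiator_cycle, jacobiator_cycle]
    exact extend (fun j ↦ h₁ x j k) y
  rw [jacobiator_cycle, jacobiator_cycle]
  exact extend (fun k ↦ h₂ x y k) z

variable {mul} (halt : mul.IsAlt)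
include halt

theorem jacobiator_self_left (x z : L) : jacobiator mul x x z = 0 := by
  rw [jacobiator, halt.self_eq_zero, map_zero, add_zero, ← halt.neg z x, map_neg,
    neg_add_cancel]

theorem jacobiator_swap (x y z : L) : jacobiator mul y x z = -jacobiator mul x y z := by
  simp only [jacobiator, ← halt.neg x y, ← halt.neg y z, ← halt.neg z x, map_neg]
  abel

theorem jacobiator_fin_three_eq_zero {e : Fin 3 → L} (h : jacobiator mul (e 0) (e 1) (e 2) = 0)
    (i j k : Fin 3) : jacobiator mul (e i) (e j) (e k) = 0 := by
  have self_mid (x y : L) : jacobiator mul x y x = 0 := by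
    rw [← jacobiator_cycle, jacobiator_self_left halt]
  have self_right (x y : L) : jacobiator mul x y y = 0 := by
    rw [jacobiator_cycle, jacobiator_self_left halt]
  have h' : jacobiator mul (e 1) (e 0) (e 2) = 0 := by rw [jacobiator_swap halt, h, neg_zero]
  fin_cases i <;> fin_cases j <;> fin_cases k <;>
    first
    | exact jacobiator_self_left halt _ _ | exact self_mid _ _ | exact self_right _ _
    | exact h | exact h' | rwa [jacobiator_cycle] | rwa [← jacobiator_cycle]

theorem jacobiator_eq_zero_iff_of_basis_fin_three (e : Basis (Fin 3) R L) :
    (∀ x y z, jacobiator mul x y z = 0) ↔ jacobiator mul (e 0) (e 1) (e 2) = 0 :=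
  ⟨fun h ↦ h _ _ _, fun h ↦
    jacobiator_eq_zero_of_basis mul e (jacobiator_fin_three_eq_zero halt h)⟩

theorem jacobiator_fin_three_eq {e f : Fin 3 → L} (hf0 : f 0 = mul (e 1) (e 2))
    (hf1 : f 1 = mul (e 2) (e 0)) (hf2 : f 2 = mul (e 0) (e 1)) {a : Matrix (Fin 3) (Fin 3) R}
    (ha : ∀ i, f i = ∑ j, a i j • e j) :
    jacobiator mul (e 0) (e 1) (e 2) =
      (a 1 2 - a 2 1) • f 0 + (a 2 0 - a 0 2) • f 1 + (a 0 1 - a 1 0) • f 2 := by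
  rw [jacobiator, ← hf0, ← hf1, ← hf2]
  conv_lhs => rw [ha 0, ha 1, ha 2]
  simp only [Fin.sum_univ_three, map_add, map_smul, halt.self_eq_zero, ← halt.neg (e 0) (e 1),
    ← halt.neg (e 1) (e 2), ← halt.neg (e 2) (e 0), ← hf0, ← hf1, ← hf2]
  module

end Jacobiator

theorem stmt15_general {F L : Type*} [Field F] [AddCommGroup L] [Module F L]
    (mul : L →ₗ[F] L →ₗ[F] L)
    (halt : ∀ x : L, mul x x = 0)
    (e : Module.Basis (Fin 3) F L)
    (f : Fin 3 → L)
    (hf0 : f 0 = mul (e 1) (e 2))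
    (hf1 : f 1 = mul (e 2) (e 0))
    (hf2 : f 2 = mul (e 0) (e 1))
    (c : Module.Basis (Fin 3) F L) (hc : ∀ i, c i = f i)
    (a : Matrix (Fin 3) (Fin 3) F)
    (ha : ∀ i, f i = ∑ j : Fin 3, a i j • e j) :
    (∀ x y z : L, mul x (mul y z) + mul y (mul z x) + mul z (mul x y) = 0) ↔
      a.IsSymm := by
  have hf : LinearIndependent F f := funext hc ▸ c.linearIndependent
  change (∀ x y z, jacobiator mul x y z = 0) ↔ _
  rw [jacobiator_eq_zero_iff_of_basis_fin_three halt e, jacobiator_fin_three_eq halt hf0 hf1 hf2 ha,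
    hf.smul_add_smul_add_smul_eq_zero_iff, Matrix.isSymm_fin_three_iff]
  simp only [sub_eq_zero]

/-- Let `char F ≠ 2`, let `e₁,e₂,e₃` be a basis of a 3-dimensional
anti-commutative algebra `L`, set `f₁ = e₂·e₃`, `f₂ = e₃·e₁`, `f₃ = e₁·e₂`,
and suppose `f₁,f₂,f₃` also form a basis with `f_i = Σ_j a_{ij} e_j`.
Then `L` satisfies the Jacobi identity iff the matrix `A = (a_{ij})` is symmetric. -/
theorem stmt15 {F L : Type*} [Field F] [AddCommGroup L] [Module F L]
    (hchar : ringChar F ≠ 2)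
    (mul : L →ₗ[F] L →ₗ[F] L)
    (halt : ∀ x : L, mul x x = 0)
    (e : Module.Basis (Fin 3) F L)
    (f : Fin 3 → L)
    (hf0 : f 0 = mul (e 1) (e 2))
    (hf1 : f 1 = mul (e 2) (e 0))
    (hf2 : f 2 = mul (e 0) (e 1))
    (c : Module.Basis (Fin 3) F L) (hc : ∀ i, c i = f i)
    (a : Matrix (Fin 3) (Fin 3) F)
    (ha : ∀ i, f i = ∑ j : Fin 3, a i j • e j) :
    (∀ x y z : L, mul x (mul y z) + mul y (mul z x) + mul z (mul x y) = 0) ↔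
      a.IsSymm :=
  stmt15_general mul halt e f hf0 hf1 hf2 c hc a ha
end

section
/- Fix b ≥ 2, a divisor n > 1 of b² + b − 1 with b of multiplicative order r > 1 modulo n, and a prime power q with n ∣ q − 1. Let V = (F_q)^r with basis e₀,…,e_{r−1}, and let U₁ = span{e_i ∧ e_{i+1 mod r} : 0 ≤ i ≤ r−1} ⊆ ∧²V. Then the linear map ψ : V → U₁ defined by e_i ↦ e_{i+1} ∧ e_{i+2} (indices mod r) intertwines the actions of the cyclic permutation matrix A (e_i ↦ e_{i+1 mod r}) and the diagonal matrix B = diag(ζ, ζ^b, …, ζ^{b^{r−1}}) for ζ an n-th root of unity in F_q, and ψ is a bijection. -/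
/-!
Write `eᵢ` for the standard basis, so that `ψ eᵢ = eᵢ₊₁ ∧ eᵢ₊₂`. The shift `A` moves both
`eᵢ` and `eᵢ₊₁ ∧ eᵢ₊₂` one step along, and the diagonal `B` scales `ψ eᵢ` by
`ζ^(b^(i+1) + b^(i+2)) = ζ^(b^i)`, because `b² + b ≡ 1` and `bʳ ≡ 1 (mod n)`.
For injectivity, the adjacent minors `(v ∧ w)ⱼ = vⱼ wⱼ₊₁ - vⱼ₊₁ wⱼ` define a linear map
`∧²V → V` sending `ψ eᵢ` to `eᵢ₊₁` once `r ≥ 3`; and `r ≥ 3` since `b² + b = 1` in `ZMod n`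
excludes both `b = 1` and `b² = 1`.
-/

open TensorProduct

section WedgeSetup

variable (F V : Type*) [Field F] [AddCommGroup V] [Module F V]

/-- The subspace of `V ⊗ V` generated by the squares `v ⊗ v`. -/
def sqRel : Submodule F (V ⊗[F] V) :=
  Submodule.span F {x : V ⊗[F] V | ∃ v : V, x = v ⊗ₜ[F] v}

/-- The exterior square `∧²V`, realized as `(V ⊗ V)/⟨v ⊗ v⟩`. -/
abbrev Wedge := (V ⊗[F] V) ⧸ sqRel F V

variable {F V}

/-- The wedge `v ∧ w` of two vectors. -/
noncomputable def wedge (v w : V) : Wedge F V := Submodule.Quotient.mk (v ⊗ₜ[F] w)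

lemma sqRel_le_comap (g : V →ₗ[F] V) :
    sqRel F V ≤ (sqRel F V).comap (TensorProduct.map g g) := by
  rw [sqRel, Submodule.span_le]
  rintro x ⟨v, rfl⟩
  have : (TensorProduct.map g g) (v ⊗ₜ[F] v) = g v ⊗ₜ[F] g v := by
    simp [TensorProduct.map_tmul]
  exact Submodule.mem_comap.mpr (by rw [this]; exact Submodule.subset_span ⟨g v, rfl⟩)

/-- The map induced by `g : V →ₗ V` on the exterior square `∧²V`. -/
noncomputable def wedgeMap (g : V →ₗ[F] V) : Wedge F V →ₗ[F] Wedge F V :=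
  Submodule.mapQ _ _ (TensorProduct.map g g) (sqRel_le_comap g)

end WedgeSetup

section

variable {F : Type*} [Field F]

section WedgeLemmas

variable {V : Type*} [AddCommGroup V] [Module F V]

lemma wedge_smul_left (c : F) (v w : V) : (wedge (c • v) w : Wedge F V) = c • wedge v w := by
  rw [wedge, wedge, ← TensorProduct.smul_tmul']
  exact Submodule.Quotient.mk_smul _ _ _

lemma wedge_smul_right (c : F) (v w : V) : (wedge v (c • w) : Wedge F V) = c • wedge v w := by
  rw [wedge, wedge, TensorProduct.tmul_smul]
  exact Submodule.Quotient.mk_smul _ _ _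

lemma wedgeMap_wedge (g : V →ₗ[F] V) (v w : V) :
    wedgeMap g (wedge v w) = wedge (g v) (g w) := rfl

end WedgeLemmas

section AdjacentMinor

variable {ι : Type*} (s : ι → ι)

noncomputable def adjacentMinor₂ : (ι → F) →ₗ[F] (ι → F) →ₗ[F] (ι → F) :=
  LinearMap.mk₂ F (fun v w j => v j * w (s j) - v (s j) * w j)
    (fun v v' w => by funext j; simp only [Pi.add_apply]; ring)
    (fun c v w => by funext j; simp only [Pi.smul_apply, smul_eq_mul]; ring)
    (fun v w w' => by funext j; simp only [Pi.add_apply]; ring)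
    (fun c v w => by funext j; simp only [Pi.smul_apply, smul_eq_mul]; ring)

noncomputable def adjacentMinor : Wedge F (ι → F) →ₗ[F] (ι → F) :=
  Submodule.liftQ _ (TensorProduct.lift (adjacentMinor₂ s)) <| by
    rw [sqRel, Submodule.span_le]
    rintro _ ⟨v, rfl⟩
    ext j
    simp only [TensorProduct.lift.tmul]
    exact sub_eq_zero.2 (mul_comm _ _)

lemma adjacentMinor_wedge (v w : ι → F) (j : ι) :
    adjacentMinor s (wedge v w) j = v j * w (s j) - v (s j) * w j := rfl

lemma adjacentMinor_wedge_single [DecidableEq ι] {a : ι} (ha : s (s a) ≠ a) :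
    adjacentMinor s (wedge (Pi.single a (1 : F)) (Pi.single (s a) 1)) = Pi.single a 1 := by
  have hsa : s a ≠ a := fun h => ha (by rw [h, h])
  ext j
  rw [adjacentMinor_wedge]
  by_cases hj : j = a
  · subst hj
    simp [hsa]
  · rw [Pi.single_eq_of_ne hj, zero_mul, zero_sub, neg_eq_zero]
    by_cases hj' : j = s a
    · rw [hj', Pi.single_eq_of_ne ha, zero_mul]
    · rw [Pi.single_eq_of_ne hj', mul_zero]

end AdjacentMinor

section Diagonal

variable {ι : Type*} [DecidableEq ι]

noncomputable abbrev diagonalMap (c : ι → F) : (ι → F) →ₗ[F] (ι → F) :=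
  LinearMap.pi fun j => c j • LinearMap.proj j

lemma diagonalMap_single (c : ι → F) (i : ι) :
    diagonalMap c (Pi.single i 1) = c i • Pi.single i (1 : F) := by
  ext j
  by_cases hj : j = i
  · subst hj; simp
  · simp [hj]

end Diagonal

section Shift

variable {ι : Type*} [AddGroup ι] [DecidableEq ι] (g : ι)

variable (F) in
noncomputable abbrev shiftMap : (ι → F) →ₗ[F] (ι → F) :=
  LinearMap.funLeft F F fun j : ι => j - g

lemma shiftMap_single (i : ι) : shiftMap F g (Pi.single i (1 : F)) = Pi.single (i + g) 1 := by
  ext j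
  simp [Pi.single_apply, sub_eq_iff_eq_add]

omit [DecidableEq ι] in
lemma shiftMap_injective : Function.Injective (shiftMap F g) :=
  LinearMap.funLeft_injective_of_surjective _ _ _ (Equiv.subRight g).surjective

variable [Finite ι]

variable (F) in
noncomputable def shiftWedge : (ι → F) →ₗ[F] Wedge F (ι → F) :=
  (Pi.basisFun F ι).constr F fun i => wedge (Pi.single (i + g) 1) (Pi.single (i + g + g) 1)

lemma shiftWedge_single (i : ι) :
    shiftWedge F g (Pi.single i 1) = wedge (Pi.single (i + g) 1) (Pi.single (i + g + g) 1) := by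
  rw [shiftWedge, ← Pi.basisFun_apply F ι, Module.Basis.constr_basis]

lemma shiftWedge_shiftMap (v : ι → F) :
    shiftWedge F g (shiftMap F g v) = wedgeMap (shiftMap F g) (shiftWedge F g v) := by
  suffices shiftWedge F g ∘ₗ shiftMap F g = wedgeMap (shiftMap F g) ∘ₗ shiftWedge F g from
    LinearMap.congr_fun this v
  refine (Pi.basisFun F ι).ext fun i => ?_
  simp only [LinearMap.comp_apply, Pi.basisFun_apply, shiftMap_single, shiftWedge_single,
    wedgeMap_wedge]

lemma shiftWedge_diagonalMap {c : ι → F} (hc : ∀ i, c (i + g) * c (i + g + g) = c i)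
    (v : ι → F) :
    shiftWedge F g (diagonalMap c v) = wedgeMap (diagonalMap c) (shiftWedge F g v) := by
  suffices shiftWedge F g ∘ₗ diagonalMap c = wedgeMap (diagonalMap c) ∘ₗ shiftWedge F g from
    LinearMap.congr_fun this v
  refine (Pi.basisFun F ι).ext fun i => ?_
  simp only [LinearMap.comp_apply, Pi.basisFun_apply, diagonalMap_single, map_smul,
    shiftWedge_single, wedgeMap_wedge, wedge_smul_left, wedge_smul_right, smul_smul]
  rw [mul_comm, hc]

lemma adjacentMinor_comp_shiftWedge (hg : g + g ≠ 0) :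
    adjacentMinor (· + g) ∘ₗ shiftWedge F g = shiftMap F g := by
  refine (Pi.basisFun F ι).ext fun i => ?_
  rw [LinearMap.comp_apply, Pi.basisFun_apply, shiftWedge_single, shiftMap_single]
  refine adjacentMinor_wedge_single _ fun h => hg ?_
  rwa [add_assoc, add_assoc, add_right_inj, add_eq_left] at h

lemma shiftWedge_injective (hg : g + g ≠ 0) : Function.Injective (shiftWedge F g) := by
  refine Function.Injective.of_comp (f := adjacentMinor (· + g)) ?_
  rw [← LinearMap.coe_comp, adjacentMinor_comp_shiftWedge g hg]
  exact shiftMap_injective g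

lemma range_shiftWedge : LinearMap.range (shiftWedge F g) = Submodule.span F
    {x | ∃ i : ι, x = wedge (Pi.single i (1 : F)) (Pi.single (i + g) 1)} := by
  rw [shiftWedge, Module.Basis.constr_range]
  congr 1
  ext x
  constructor
  · rintro ⟨i, rfl⟩
    exact ⟨i + g, rfl⟩
  · rintro ⟨i, rfl⟩
    exact ⟨i - g, by simp only [sub_add_cancel]⟩

end Shift

end

section Arithmetic

lemma pow_eq_pow_of_natCast_eq {M : Type*} [Monoid M] {ζ : M} {n s t : ℕ} (hζ : ζ ^ n = 1)
    (h : (s : ZMod n) = t) : ζ ^ s = ζ ^ t := by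
  rw [pow_eq_pow_mod s hζ, pow_eq_pow_mod t hζ, (ZMod.natCast_eq_natCast_iff' s t n).1 h]

lemma pow_val_add_one {M : Type*} [Monoid M] {x : M} {r : ℕ} [NeZero r] (hx : x ^ r = 1)
    (j : Fin r) : x ^ ((j + 1 : Fin r) : ℕ) = x ^ (j : ℕ) * x := by
  rw [Fin.val_add, ← pow_eq_pow_mod _ hx, pow_add, Fin.val_one', ← pow_eq_pow_mod _ hx, pow_one]

lemma pow_val_add_one_add_pow_val_add_one_add_one {R : Type*} [CommRing R] {β : R} {r : ℕ}
    [NeZero r] (hβ : β ^ 2 + β = 1) (hr : β ^ r = 1) (i : Fin r) :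
    β ^ ((i + 1 : Fin r) : ℕ) + β ^ ((i + 1 + 1 : Fin r) : ℕ) = β ^ (i : ℕ) := by
  rw [pow_val_add_one hr, pow_val_add_one hr, pow_val_add_one hr]
  linear_combination β ^ (i : ℕ) * hβ

lemma three_le_orderOf_of_sq_add_self_eq_one {R : Type*} [CommRing R] [Nontrivial R] {β : R}
    (hβ : β ^ 2 + β = 1) (hpos : 0 < orderOf β) : 3 ≤ orderOf β := by
  by_contra! hlt
  have hpow := pow_orderOf_eq_one β
  interval_cases h : orderOf β
  · rw [pow_one] at hpow
    subst hpow
    exact one_ne_zero (by linear_combination hβ : (1 : R) = 0)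
  · have hβ0 : β = 0 := by linear_combination hβ - hpow
    subst hβ0
    norm_num at hβ

lemma Fin.one_add_one_ne_zero {r : ℕ} [NeZero r] (hr : 3 ≤ r) : (1 + 1 : Fin r) ≠ 0 := by
  intro h
  have := congrArg Fin.val h
  simp only [Fin.val_add, Fin.val_one', Fin.val_zero] at this
  rw [Nat.mod_eq_of_lt (by omega : 1 < r), Nat.mod_eq_of_lt (by omega : 2 < r)] at this
  omega

end Arithmetic

theorem stmt16_general (b n r : ℕ) [NeZero r]
    (hb : 2 ≤ b) (hn : 1 < n) (hdvd : n ∣ b ^ 2 + b - 1)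
    (hr : r = orderOf (b : ZMod n))
    {F : Type*} [Field F]
    (ζ : F) (hζ : ζ ^ n = 1) :
    ∀ (A B : (Fin r → F) →ₗ[F] (Fin r → F)),
      A = LinearMap.funLeft F F (fun j : Fin r => j - 1) →
      B = LinearMap.pi (fun i : Fin r => (ζ ^ (b ^ (i : ℕ))) • LinearMap.proj i) →
      ∀ ψ : (Fin r → F) →ₗ[F] Wedge F (Fin r → F),
        ψ = (Pi.basisFun F (Fin r)).constr F
          (fun i : Fin r => wedge (Pi.single (i + 1) (1 : F))
            (Pi.single (i + 1 + 1) (1 : F))) →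
        (∀ v : Fin r → F, ψ (A v) = wedgeMap A (ψ v)) ∧
        (∀ v : Fin r → F, ψ (B v) = wedgeMap B (ψ v)) ∧
        Function.Injective ψ ∧
        LinearMap.range ψ = Submodule.span F {x : Wedge F (Fin r → F) |
          ∃ i : Fin r, x = wedge (Pi.single i (1 : F)) (Pi.single (i + 1) (1 : F))} := by
  rintro A B rfl rfl ψ rfl
  have : Fact (1 < n) := ⟨hn⟩
  have hβ : (b : ZMod n) ^ 2 + b = 1 := by
    have h := (ZMod.natCast_eq_zero_iff _ _).2 hdvd
    rw [Nat.cast_sub (by nlinarith), sub_eq_zero] at h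
    exact_mod_cast h
  have hβr : (b : ZMod n) ^ r = 1 := hr ▸ pow_orderOf_eq_one _
  have hr3 : 3 ≤ r := hr ▸ three_le_orderOf_of_sq_add_self_eq_one hβ (hr ▸ NeZero.pos r)
  have hweight (i : Fin r) :
      ζ ^ b ^ ((i + 1 : Fin r) : ℕ) * ζ ^ b ^ ((i + 1 + 1 : Fin r) : ℕ) = ζ ^ b ^ (i : ℕ) := by
    rw [← pow_add]
    refine pow_eq_pow_of_natCast_eq hζ ?_
    push_cast
    exact pow_val_add_one_add_pow_val_add_one_add_one hβ hβr i
  exact ⟨shiftWedge_shiftMap 1, shiftWedge_diagonalMap 1 hweight,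
    shiftWedge_injective 1 (Fin.one_add_one_ne_zero hr3), range_shiftWedge 1⟩

/-- Fix `b ≥ 2`, a divisor `n > 1` of `b² + b − 1` with `b` of
multiplicative order `r > 1` modulo `n`, and a prime power `q` with `n ∣ q − 1`.
Let `V = (F_q)^r` with standard basis `e₀,…,e_{r−1}`, let
`U₁ = span{e_i ∧ e_{i+1}} ⊆ ∧²V`, let `A` be the cyclic shift `e_i ↦ e_{i+1}`,
and let `B = diag(ζ, ζ^b, …, ζ^{b^{r−1}})` for `ζ` an `n`-th root of unity.
Then the linear map `ψ : V → ∧²V`, `e_i ↦ e_{i+1} ∧ e_{i+2}`, intertwines the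
actions of `A` and `B` on `V` and on `∧²V`, and is a bijection onto `U₁`. -/
theorem stmt16 (b n r q : ℕ) [NeZero r]
    (hb : 2 ≤ b) (hn : 1 < n) (hdvd : n ∣ b ^ 2 + b - 1)
    (hr : r = orderOf (b : ZMod n)) (hr1 : 1 < r)
    (hq : IsPrimePow q) (hnq : n ∣ q - 1)
    {F : Type*} [Field F] [Fintype F] (hF : Fintype.card F = q)
    (ζ : F) (hζ : ζ ^ n = 1) :
    ∀ (A B : (Fin r → F) →ₗ[F] (Fin r → F)),
      A = LinearMap.funLeft F F (fun j : Fin r => j - 1) →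
      B = LinearMap.pi (fun i : Fin r => (ζ ^ (b ^ (i : ℕ))) • LinearMap.proj i) →
      ∀ ψ : (Fin r → F) →ₗ[F] Wedge F (Fin r → F),
        ψ = (Pi.basisFun F (Fin r)).constr F
          (fun i : Fin r => wedge (Pi.single (i + 1) (1 : F))
            (Pi.single (i + 1 + 1) (1 : F))) →
        (∀ v : Fin r → F, ψ (A v) = wedgeMap A (ψ v)) ∧
        (∀ v : Fin r → F, ψ (B v) = wedgeMap B (ψ v)) ∧
        Function.Injective ψ ∧
        LinearMap.range ψ = Submodule.span F {x : Wedge F (Fin r → F) |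
          ∃ i : Fin r, x = wedge (Pi.single i (1 : F)) (Pi.single (i + 1) (1 : F))} :=
  stmt16_general b n r hb hn hdvd hr ζ hζ
end

section
/- Fix b ≥ 2, a divisor n > 1 of b² + b − 1 with b of order r > 1 modulo n, and a prime power q with n ∣ q − 1. Define on L = (F_q)^r with basis e₀,…,e_{r−1} (indices mod r) the anti-commutative product: e₀·e₁ = e_{r−1}; e_{i−1}·e_i = e_{i−2} for 2 ≤ i ≤ r−1; e_{r−1}·e₀ = e_{r−2}; and e_i·e_j = 0 whenever j − i ≢ ±1 (mod r). Then L is a simple algebra: its only ideals are 0 and L. -/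
/-!
Write `e i` for the basis vectors. The products of basis vectors give
`(e i · e (m+1)) · e m = e (m-2)` if `i = m` and `0` otherwise, so for any `v` the element
`(v · e (m+1)) · e m` is `v m • e (m-2)`. A non-zero ideal therefore contains some `e j`, and then
also `e j · e (j+1) = e (j-1)`; walking down the cycle it contains every `e j`, hence everything.
-/

section

variable {F : Type*} [Field F] {r : ℕ} [NeZero r]

local notation "e" i => (Pi.single i (1 : F) : Fin r → F)

structure IsCyclicProduct (mul : (Fin r → F) →ₗ[F] (Fin r → F) →ₗ[F] (Fin r → F)) : Prop where
  isAlt : mul.IsAlt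
  single_mul_single_succ : ∀ i : Fin r, mul (e i) (e (i + 1)) = e (i - 1)
  single_mul_single_of_ne : ∀ i j : Fin r, j ≠ i + 1 → i ≠ j + 1 → mul (e i) (e j) = 0

namespace IsCyclicProduct

variable {mul : (Fin r → F) →ₗ[F] (Fin r → F) →ₗ[F] (Fin r → F)} (h : IsCyclicProduct mul)
include h

theorem mul_mul_single_single (i m : Fin r) :
    mul (mul (e i) (e (m + 1))) (e m) = if i = m then e (m - 2) else 0 := by
  split_ifs with him
  · subst him
    have hprev := h.single_mul_single_succ (i - 1)
    rw [sub_add_cancel] at hprev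
    rw [h.single_mul_single_succ, hprev]
    congr 1
    open Fin.CommRing in ring
  have hm : m + 1 + 1 = m + 2 := by open Fin.CommRing in ring
  by_cases hi : i = m + 2
  · have hsucc := h.single_mul_single_succ (m + 1)
    rw [hm, add_sub_cancel_right] at hsucc
    rw [hi, ← h.isAlt.neg (e (m + 1)), hsucc, map_neg, LinearMap.neg_apply,
      h.isAlt.self_eq_zero, neg_zero]
  · have hne₁ : m + 1 ≠ i + 1 := fun heq => him (add_right_cancel heq).symm
    have hne₂ : i ≠ m + 1 + 1 := by rwa [hm]
    rw [h.single_mul_single_of_ne i (m + 1) hne₁ hne₂, map_zero, LinearMap.zero_apply]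

theorem mul_mul_single (v : Fin r → F) (m : Fin r) :
    mul (mul v (e (m + 1))) (e m) = v m • e (m - 2) := by
  conv_lhs => rw [pi_eq_sum_univ' v]
  simp only [map_sum, map_smul, LinearMap.sum_apply, LinearMap.smul_apply,
    h.mul_mul_single_single, smul_ite, smul_zero, Finset.sum_ite_eq', Finset.mem_univ, if_true]

variable {I : Submodule F (Fin r → F)} (hI : ∀ x ∈ I, ∀ y, mul x y ∈ I)
include hI

theorem exists_single_mem (hI₀ : I ≠ ⊥) : ∃ j, (e j) ∈ I := by
  obtain ⟨v, hvI, hv⟩ := (Submodule.ne_bot_iff I).mp hI₀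
  obtain ⟨m, hm⟩ := Function.ne_iff.mp hv
  refine ⟨m - 2, ?_⟩
  have hmem := I.smul_mem (v m)⁻¹ (hI _ (hI v hvI (e (m + 1))) (e m))
  rwa [h.mul_mul_single, smul_smul, inv_mul_cancel₀ hm, one_smul] at hmem

open Fin.CommRing in
theorem single_sub_natCast_mem {j : Fin r} (hj : (e j) ∈ I) (t : ℕ) :
    (e (j - (t : Fin r))) ∈ I := by
  induction t with
  | zero => simpa using hj
  | succ t ih =>
    have hmem := hI _ ih (e (j - (t : Fin r) + 1))
    rw [Nat.cast_succ, ← sub_sub]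
    rwa [h.single_mul_single_succ] at hmem

open Fin.CommRing in
theorem eq_top_of_single_mem {j : Fin r} (hj : (e j) ∈ I) : I = ⊤ := by
  have hall : ∀ i, (e i) ∈ I := fun i => by
    simpa using h.single_sub_natCast_mem hI hj (j - i).val
  rw [eq_top_iff]
  intro v _
  rw [pi_eq_sum_univ' v]
  exact I.sum_mem fun i _ => I.smul_mem _ (hall i)

end IsCyclicProduct

end

theorem stmt17_general (r : ℕ) [NeZero r]
    {F : Type*} [Field F]
    (mul : (Fin r → F) →ₗ[F] (Fin r → F) →ₗ[F] (Fin r → F))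
    (halt : ∀ x : Fin r → F, mul x x = 0)
    (hmul : ∀ i : Fin r,
      mul (Pi.single i (1 : F)) (Pi.single (i + 1) (1 : F)) = Pi.single (i - 1) (1 : F))
    (hzero : ∀ i j : Fin r, j ≠ i + 1 → i ≠ j + 1 →
      mul (Pi.single i (1 : F)) (Pi.single j (1 : F)) = 0) :
    ∀ I : Submodule F (Fin r → F),
      (∀ x ∈ I, ∀ y : Fin r → F, mul x y ∈ I) → I = ⊥ ∨ I = ⊤ := by
  intro I hI
  have h : IsCyclicProduct mul := ⟨halt, hmul, hzero⟩
  refine or_iff_not_imp_left.mpr fun hI₀ => ?_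
  obtain ⟨j, hj⟩ := h.exists_single_mem hI hI₀
  exact h.eq_top_of_single_mem hI hj

/-- Fix `b ≥ 2`, a divisor `n > 1` of `b² + b − 1` with `b` of
multiplicative order `r > 1` modulo `n`, and a prime power `q` with `n ∣ q − 1`.
The anti-commutative algebra on `L = (F_q)^r` with basis `e₀,…,e_{r−1}` (indices
mod `r`) and products `e_i·e_{i+1} = e_{i−1}` (which encodes `e₀·e₁ = e_{r−1}`,
`e_{i−1}·e_i = e_{i−2}` for `2 ≤ i ≤ r−1`, and `e_{r−1}·e₀ = e_{r−2}`) and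
`e_i·e_j = 0` whenever `j − i ≢ ±1 (mod r)`, is simple: its only ideals are `0`
and `L`. -/
theorem stmt17 (b n r q : ℕ) [NeZero r]
    (hb : 2 ≤ b) (hn : 1 < n) (hdvd : n ∣ b ^ 2 + b - 1)
    (hr : r = orderOf (b : ZMod n)) (hr1 : 1 < r)
    (hq : IsPrimePow q) (hnq : n ∣ q - 1)
    {F : Type*} [Field F] [Fintype F] (hF : Fintype.card F = q)
    (mul : (Fin r → F) →ₗ[F] (Fin r → F) →ₗ[F] (Fin r → F))
    (halt : ∀ x : Fin r → F, mul x x = 0)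
    (hmul : ∀ i : Fin r,
      mul (Pi.single i (1 : F)) (Pi.single (i + 1) (1 : F)) = Pi.single (i - 1) (1 : F))
    (hzero : ∀ i j : Fin r, j ≠ i + 1 → i ≠ j + 1 →
      mul (Pi.single i (1 : F)) (Pi.single j (1 : F)) = 0) :
    ∀ I : Submodule F (Fin r → F),
      (∀ x ∈ I, ∀ y : Fin r → F, mul x y ∈ I) → I = ⊥ ∨ I = ⊤ :=
  stmt17_general r mul halt hmul hzero
end
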